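/- arXiv:1808.03159 — 11 statements merged into one kernel-verified Lean document; each statement's English description precedes it below -/
import Mathlib

section
/- For every real constant τ ≥ 4/ln 2 there exists s₀ = s₀(τ) such that for every integer s ≥ s₀ there exists an (N, s+3, 2s+1)-suitable core with N = (s+3)(s−1) + ⌈τ·ln s⌉. -/
/-!
Use `s` normal symbols `inl x` and three rich symbols `inr i`, and colour the pairs of normal
symbols with the rich ones so that no `q`-set is monochromatic, where `q = ⌊(R - 3) / 3⌋` and
`R = ⌈τ ln s⌉`; Erdős' counting argument gives such a colouring `c` once
`3 s^q < 3^(q choose 2)`, which `τ ≥ 4 / ln 2` ensures for large `s`. The rows start with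
`x, y, r` for each ordered pair `x ≠ y`, where the rich symbols `r` ending the rows `(x, y)` and
`(y, x)` are the two colours other than `c {x, y}`; with `i, y` for each rich `i` and normal `y`;
and with `i` in `q` further rows for each rich `i`. That is `s (s - 1) + 3 s + 3 q` rows.

Let `σ ∉ T` and let `U` be the set of normal symbols outside `T`. A normal `σ = x` comes first in
the `s - 1` rows `(x, y)` and second in the rows `(z, x)` with `z ∈ U` and `(i, x)` with
`inr i ∉ T`. A rich `σ = i` comes first in `s + q` rows, and third in one of the rows `(a, b)`,
`(b, a)` for every pair in `U` not coloured `i`. Deleting one end of each such pair leaves an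
`i`-monochromatic set, so there are more than `|U| - q` of these pairs.
-/

/-- An `(N, w, t)`-suitable core: an `N × w` array whose rows are permutations of `{1,…,w}`
(row `i`, position `j` holds symbol `C i j`) such that for each `s` with `0 ≤ s ≤ t−1`,
each symbol precedes each set of `s` other symbols in at least `t − s` rows. -/
def IsSuitableCore (N w t : ℕ) (C : Fin N → Equiv.Perm (Fin w)) : Prop :=
  ∀ (σ : Fin w) (T : Finset (Fin w)), σ ∉ T → T.card < t →
    t - T.card ≤ (Finset.univ.filter fun i : Fin N =>
      ∀ τ ∈ T, (C i).symm σ < (C i).symm τ).card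

def SuitableCoreExists (N w t : ℕ) : Prop :=
  ∃ C : Fin N → Equiv.Perm (Fin w), IsSuitableCore N w t C

open Finset

namespace SuitableCore

section Arrangements

variable {α : Type*} [DecidableEq α]

-- A row is a duplicate-free list of all symbols, the position of a symbol being its `idxOf`.
abbrev Precedes (l : List α) (σ : α) (T : Finset α) : Prop :=
  ∀ τ ∈ T, l.idxOf σ < l.idxOf τ

theorem precedes_append_cons {l₁ l₂ : List α} {σ : α} {T : Finset α} (hσ : σ ∉ l₁)
    (hσT : σ ∉ T) (hl₁ : ∀ x ∈ l₁, x ∉ T) : Precedes (l₁ ++ σ :: l₂) σ T := by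
  intro τ hτ
  have hστ : σ ≠ τ := by rintro rfl; exact hσT hτ
  rw [List.idxOf_append_of_notMem hσ, List.idxOf_append_of_notMem fun h => hl₁ τ h hτ,
    List.idxOf_cons_self, List.idxOf_cons_ne _ hστ]
  omega

variable [Fintype α]

noncomputable def completion (l : List α) : List α := l ++ (univ \ l.toFinset).toList

theorem nodup_completion {l : List α} (hl : l.Nodup) : (completion l).Nodup :=
  hl.append (nodup_toList _) fun x hx hx' => by simp_all

theorem mem_completion (l : List α) (x : α) : x ∈ completion l := by
  by_cases hx : x ∈ l <;> simp [completion, hx]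

theorem precedes_completion {l₁ l₂ : List α} {σ : α} {T : Finset α} (hσ : σ ∉ l₁)
    (hσT : σ ∉ T) (hl₁ : ∀ x ∈ l₁, x ∉ T) : Precedes (completion (l₁ ++ σ :: l₂)) σ T := by
  rw [completion, List.append_assoc, List.cons_append]
  exact precedes_append_cons hσ hσT hl₁

end Arrangements

theorem _root_.SuitableCoreExists.of_lists {ι α : Type*} [Fintype ι] [Fintype α] [DecidableEq α]
    {w t : ℕ} (e : α ≃ Fin w) (L : ι → List α) (hnodup : ∀ i, (L i).Nodup)
    (hmem : ∀ i x, x ∈ L i)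
    (hL : ∀ σ (T : Finset α), σ ∉ T → #T < t → t - #T ≤ #{i | Precedes (L i) σ T}) :
    SuitableCoreExists (Fintype.card ι) w t := by
  let get i := (hnodup i).getEquivOfForallMemList _ (hmem i)
  have hlen i : (L i).length = w := by simpa using Fintype.card_congr ((get i).trans e)
  let row i : Equiv.Perm (Fin w) := ((finCongr (hlen i)).symm.trans (get i)).trans e
  have hrow i σ : ((row i).symm σ : ℕ) = (L i).idxOf (e.symm σ) := rfl
  refine ⟨fun j => row ((Fintype.equivFin ι).symm j), fun σ T hσT hT => ?_⟩
  have := hL (e.symm σ) (T.map e.symm.toEmbedding) (by simpa using hσT) (by simpa using hT)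
  rw [card_map] at this
  refine this.trans (le_of_eq (card_equiv (Fintype.equivFin ι) fun i => ?_))
  simp only [Precedes, mem_map_equiv, Equiv.symm_symm, mem_filter, mem_univ, true_and,
    Fin.lt_def, hrow, Equiv.symm_apply_apply]
  exact ⟨fun h τ hτ => h _ (by simpa using hτ), fun h τ hτ => by simpa using h _ hτ⟩

theorem _root_.SuitableCoreExists.mono {N M w t : ℕ} (h : SuitableCoreExists N w t) (hNM : N ≤ M) :
    SuitableCoreExists M w t := by
  obtain ⟨C, hC⟩ := h
  refine ⟨fun i => if hi : (i : ℕ) < N then C ⟨i, hi⟩ else 1,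
    fun σ T hσT hT => (hC σ T hσT hT).trans ?_⟩
  refine card_le_card_of_injOn (Fin.castLE hNM) (fun i hi => ?_) (Fin.castLE_injective hNM).injOn
  simpa using hi

theorem exists_independent_subset {β : Type*} [DecidableEq β] (V : Finset β)
    (E : Finset (β × β)) : ∃ I ⊆ V, #V ≤ #I + #E ∧ ∀ a ∈ I, ∀ b ∈ I, (a, b) ∉ E := by
  refine ⟨V \ E.image Prod.fst, sdiff_subset, ?_, fun a ha b _ hab => ?_⟩
  · exact card_le_card_sdiff_add_card.trans (by gcongr; exact card_image_le)
  · exact (mem_sdiff.1 ha).2 (mem_image_of_mem _ hab)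

theorem card_filter_sum {ι₁ ι₂ : Type*} [Fintype ι₁] [Fintype ι₂] (P : ι₁ ⊕ ι₂ → Prop)
    [DecidablePred P] : #{x | P x} = #{a | P (.inl a)} + #{b | P (.inr b)} := by
  rw [← card_toLeft_add_card_toRight]
  congr 2 <;> ext <;> simp

theorem card_filter_coe {β : Type*} (S : Finset β) (P : β → Prop) [DecidablePred P] :
    #{x : S | P x} = #{x ∈ S | P x} := by
  rw [univ_eq_attach, filter_attach, card_map, card_attach]

section Ramsey

open Fintype

variable {α κ : Type*} [Fintype α] [DecidableEq α] [Fintype κ] [DecidableEq κ]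

abbrev IsMonochromatic (c : Sym2 α → κ) (i : κ) (S : Finset α) : Prop :=
  ∀ a ∈ S, ∀ b ∈ S, a ≠ b → c s(a, b) = i

theorem card_isMonochromatic_mul (S : Finset α) (i : κ) :
    #{c : Sym2 α → κ | IsMonochromatic c i S} * card κ ^ (#S).choose 2 =
      card κ ^ card (Sym2 α) := by
  set P := S.offDiag.image Sym2.mk.uncurry
  have hmono : ({c : Sym2 α → κ | IsMonochromatic c i S} : Finset _) =
      piFinset fun e => if e ∈ P then {i} else univ := by
    ext c
    simp only [IsMonochromatic, mem_filter, mem_univ, true_and, Fintype.mem_piFinset]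
    refine ⟨fun h e => ?_, fun h a ha b hb hab => ?_⟩
    · split_ifs with he
      · obtain ⟨⟨a, b⟩, hab, rfl⟩ := mem_image.1 he
        simp only [mem_offDiag] at hab
        exact mem_singleton.2 (h a hab.1 b hab.2.1 hab.2.2)
      · exact mem_univ _
    · have he : s(a, b) ∈ P := mem_image.2 ⟨(a, b), mem_offDiag.2 ⟨ha, hb, hab⟩, rfl⟩
      simpa [he] using h s(a, b)
  have hP : #P = (#S).choose 2 := Sym2.card_image_offDiag S
  rw [hmono, card_piFinset, ← hP, ← prod_const, ← Fintype.prod_ite_mem P, ← prod_mul_distrib]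
  trans ∏ _e : Sym2 α, card κ
  · exact prod_congr rfl fun e _ => by split_ifs <;> simp
  · simp

theorem exists_coloring_forall_card_lt [Nonempty κ] {q : ℕ}
    (h : card κ * (card α).choose q < card κ ^ q.choose 2) :
    ∃ c : Sym2 α → κ, ∀ i S, IsMonochromatic c i S → #S < q := by
  by_contra! H
  have hcover : (univ : Finset (Sym2 α → κ)) ⊆ (powersetCard q univ ×ˢ univ).biUnion
      fun p : Finset α × κ => {c | IsMonochromatic c p.2 p.1} := by
    intro c _
    obtain ⟨i, S, hS, hqS⟩ := H c
    obtain ⟨S', hS'S, hS'⟩ := exists_subset_card_eq hqS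
    refine mem_biUnion.2 ⟨(S', i), by simp [hS'], mem_filter.2 ⟨mem_univ _, ?_⟩⟩
    exact fun a ha b hb hab => hS a (hS'S ha) b (hS'S hb) hab
  have hcount : card κ ^ card (Sym2 α) * card κ ^ q.choose 2 ≤
      card κ * (card α).choose q * card κ ^ card (Sym2 α) :=
    calc _ ≤ (∑ p ∈ powersetCard q univ ×ˢ univ, #{c | IsMonochromatic c p.2 p.1}) *
          card κ ^ q.choose 2 := by
          gcongr
          simpa using (card_le_card hcover).trans card_biUnion_le
      _ = ∑ p ∈ powersetCard q (univ : Finset α) ×ˢ (univ : Finset κ), card κ ^ card (Sym2 α) := by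
          rw [sum_mul]
          refine sum_congr rfl fun p hp => ?_
          rw [← (mem_powersetCard.1 (mem_product.1 hp).1).2]
          exact card_isMonochromatic_mul _ _
      _ = _ := by simp [card_powersetCard, mul_comm]
  have := Nat.mul_lt_mul_of_pos_right h (pow_pos (card_pos (α := κ)) (card (Sym2 α)))
  linarith [mul_comm (card κ ^ card (Sym2 α)) (card κ ^ q.choose 2)]

end Ramsey

section Construction

variable {s : ℕ} (c : Sym2 (Fin s) → Fin 3)

def thirdColor (x y : Fin s) : Fin 3 := c s(x, y) + if x < y then 1 else 2

theorem color_eq_of_thirdColor_ne {x y : Fin s} (hxy : x ≠ y) {i : Fin 3}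
    (h₁ : thirdColor c x y ≠ i) (h₂ : thirdColor c y x ≠ i) : c s(x, y) = i := by
  have key : ∀ a b : Fin 3, a + 1 ≠ b → a + 2 ≠ b → a = b := by decide
  rw [thirdColor, Sym2.eq_swap] at h₂
  rw [thirdColor] at h₁
  rcases hxy.lt_or_gt with h | h
  · rw [if_pos h] at h₁
    rw [if_neg h.asymm] at h₂
    exact key _ _ h₁ h₂
  · rw [if_neg h.asymm] at h₁
    rw [if_pos h] at h₂
    exact key _ _ h₂ h₁

noncomputable def pairRow (p : Fin s × Fin s) : List (Fin s ⊕ Fin 3) :=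
  completion [.inl p.1, .inl p.2, .inr (thirdColor c p.1 p.2)]

noncomputable def mixedRow (p : Fin 3 × Fin s) : List (Fin s ⊕ Fin 3) :=
  completion [.inr p.1, .inl p.2]

noncomputable def richRow (i : Fin 3) : List (Fin s ⊕ Fin 3) :=
  completion [.inr i]

variable {c} {T : Finset (Fin s ⊕ Fin 3)}

theorem card_pairRow_normal {x : Fin s} (hx : .inl x ∉ T) :
    s - 1 + (s - #T.toLeft - 1) ≤ #{p ∈ univ.offDiag | Precedes (pairRow c p) (.inl x) T} := by
  have hxU : x ∈ T.toLeftᶜ := by simpa using hx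
  have hdisj : Disjoint ({x} ×ˢ univ.erase x) (T.toLeftᶜ.erase x ×ˢ {x}) := by
    rw [disjoint_left]
    rintro ⟨a, b⟩ h₁ h₂
    simp only [mem_product, mem_singleton, mem_erase] at h₁ h₂
    exact h₂.1.1 h₁.1
  calc s - 1 + (s - #T.toLeft - 1) = #(({x} ×ˢ univ.erase x) ∪ (T.toLeftᶜ.erase x ×ˢ {x})) := by
        rw [card_union_of_disjoint hdisj, card_product, card_product, card_erase_of_mem hxU,
          card_erase_of_mem (mem_univ x), card_compl]
        simp
    _ ≤ _ := card_le_card fun p hp => ?_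
  simp only [mem_union, mem_product, mem_singleton, mem_erase, mem_compl, mem_toLeft,
    mem_univ, and_true] at hp
  obtain ⟨a, b⟩ := p
  rcases hp with ⟨rfl, hb⟩ | ⟨⟨hab, ha⟩, rfl⟩
  · refine mem_filter.2 ⟨mem_offDiag.2 ⟨mem_univ _, mem_univ _, Ne.symm hb⟩, ?_⟩
    exact precedes_completion (l₁ := []) List.not_mem_nil hx (by simp)
  · refine mem_filter.2 ⟨mem_offDiag.2 ⟨mem_univ _, mem_univ _, hab⟩, ?_⟩
    exact precedes_completion (l₁ := [.inl a]) (by simpa using Ne.symm hab) hx (by simpa using ha)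

theorem card_mixedRow_normal {x : Fin s} (hx : .inl x ∉ T) :
    3 - #T.toRight ≤ #{p | Precedes (mixedRow p) (.inl x) T} := by
  calc 3 - #T.toRight = #(T.toRightᶜ ×ˢ {x}) := by simp [card_compl]
    _ ≤ _ := card_le_card fun p hp => ?_
  simp only [mem_product, mem_compl, mem_toRight, mem_singleton] at hp
  rw [mem_filter, mixedRow, hp.2]
  exact ⟨mem_univ _,
    precedes_completion (l₁ := [(.inr p.1 : Fin s ⊕ Fin 3)]) (by simp) hx (by simpa using hp.1)⟩

theorem card_mixedRow_rich {i : Fin 3} (hi : .inr i ∉ T) :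
    s ≤ #{p | Precedes (mixedRow p) (.inr i) T} := by
  calc s = #({i} ×ˢ (univ : Finset (Fin s))) := by simp
    _ ≤ _ := card_le_card fun p hp => ?_
  rw [mem_product, mem_singleton] at hp
  rw [mem_filter, mixedRow, hp.1]
  exact ⟨mem_univ _, precedes_completion (l₁ := []) List.not_mem_nil hi (by simp)⟩

theorem card_richRow {q : ℕ} {i : Fin 3} (hi : .inr i ∉ T) :
    q ≤ #{p : Fin 3 × Fin q | Precedes (richRow (s := s) p.1) (.inr i) T} := by
  calc q = #({i} ×ˢ (univ : Finset (Fin q))) := by simp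
    _ ≤ _ := card_le_card fun p hp => ?_
  rw [mem_product, mem_singleton] at hp
  rw [mem_filter, richRow, hp.1]
  exact ⟨mem_univ _, precedes_completion (l₁ := []) List.not_mem_nil hi (by simp)⟩

theorem card_pairRow_rich {q : ℕ} {i : Fin 3} (hi : .inr i ∉ T)
    (hc : ∀ S, IsMonochromatic c i S → #S < q) :
    s - #T.toLeft < #{p ∈ univ.offDiag | Precedes (pairRow c p) (.inr i) T} + q := by
  set E := T.toLeftᶜ.offDiag.filter fun p => thirdColor c p.1 p.2 = i
  obtain ⟨I, hIU, hcard, hI⟩ := exists_independent_subset T.toLeftᶜ E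
  have hmem {a b} (ha : a ∈ I) (hb : b ∈ I) (hab : a ≠ b) (h : thirdColor c a b = i) : (a, b) ∈ E :=
    mem_filter.2 ⟨mem_offDiag.2 ⟨hIU ha, hIU hb, hab⟩, h⟩
  have hmono : IsMonochromatic c i I := fun a ha b hb hab =>
    color_eq_of_thirdColor_ne c hab (fun h => hI a ha b hb (hmem ha hb hab h))
      (fun h => hI b hb a ha (hmem hb ha (Ne.symm hab) h))
  have hE : E ⊆ {p ∈ (univ : Finset (Fin s)).offDiag | Precedes (pairRow c p) (.inr i) T} := by
    intro p hp
    obtain ⟨hp, hpi⟩ := mem_filter.1 hp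
    obtain ⟨h₁, h₂, h₁₂⟩ := mem_offDiag.1 hp
    rw [mem_filter, pairRow, hpi]
    refine ⟨mem_offDiag.2 ⟨mem_univ _, mem_univ _, h₁₂⟩, ?_⟩
    rw [mem_compl, mem_toLeft] at h₁ h₂
    exact precedes_completion (l₁ := [.inl p.1, .inl p.2]) (by simp) hi (by simp [h₁, h₂])
  rw [Finset.card_compl, Fintype.card_fin] at hcard
  have hIq := hc I hmono
  have hE_card := card_le_card hE
  omega

variable (c) in
noncomputable def coreRow (q : ℕ) :
    (univ : Finset (Fin s)).offDiag ⊕ (Fin 3 × Fin s) ⊕ (Fin 3 × Fin q) → List (Fin s ⊕ Fin 3) :=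
  Sum.elim (fun p => pairRow c p) (Sum.elim mixedRow fun p => richRow p.1)

theorem suitableCoreExists_of_coloring {q : ℕ} (hc : ∀ i S, IsMonochromatic c i S → #S < q) :
    SuitableCoreExists (s * s - s + 3 * s + 3 * q) (s + 3) (2 * s + 1) := by
  have hcard : Fintype.card ((univ : Finset (Fin s)).offDiag ⊕ (Fin 3 × Fin s) ⊕ (Fin 3 × Fin q))
      = s * s - s + 3 * s + 3 * q := by
    simp only [Fintype.card_sum, Fintype.card_coe, offDiag_card, Fintype.card_prod, card_univ,
      Fintype.card_fin]
    omega
  rw [← hcard]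
  refine SuitableCoreExists.of_lists finSumFinEquiv (coreRow c q) ?_ (fun r x => ?_)
    fun σ T hσ hT => ?_
  · rintro (⟨⟨x, y⟩, hxy⟩ | ⟨i, y⟩ | ⟨i, t⟩) <;> apply nodup_completion
    · simpa using (mem_offDiag.1 hxy).2.2
    all_goals simp
  · rcases r with _ | _ | _ <;> exact mem_completion _ _
  · have hsplit : #{r | Precedes (coreRow c q r) σ T} =
        #{p ∈ univ.offDiag | Precedes (pairRow c p) σ T} + #{p | Precedes (mixedRow p) σ T} +
          #{p : Fin 3 × Fin q | Precedes (richRow p.1) σ T} := by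
      rw [card_filter_sum, card_filter_sum, add_assoc]
      exact congrArg₂ (· + ·) (card_filter_coe univ.offDiag fun p => Precedes (pairRow c p) σ T) rfl
    rw [hsplit]
    have hT := card_toLeft_add_card_toRight (u := T)
    rcases σ with x | i
    · have := card_pairRow_normal (c := c) hσ
      have := card_mixedRow_normal hσ
      have := card_lt_univ_of_notMem (s := T.toLeft) (x := x) (by simpa using hσ)
      have := card_le_univ T.toRight
      simp only [Fintype.card_fin] at *
      omega
    · have := card_pairRow_rich hσ (hc i)
      have := card_mixedRow_rich hσ
      have := card_richRow (q := q) hσ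
      omega

end Construction

section Estimates

open Real

theorem mul_pow_lt_pow_choose_two {b n q : ℕ} (hb : 1 < b) (hn : 0 < n)
    (h : 2 * log n + 3 * log b ≤ q * log b) : b * n ^ q < b ^ q.choose 2 := by
  have hlb : 0 < log b := log_pos (by exact_mod_cast hb)
  have hln : 0 ≤ log n := log_nonneg (by exact_mod_cast hn)
  have hq : (3 : ℝ) ≤ q := le_of_mul_le_mul_right (by linarith) hlb
  rw [← Nat.cast_lt (α := ℝ), ← log_lt_log_iff (by positivity) (by positivity)]
  push_cast
  rw [log_mul (by positivity) (by positivity), log_pow, log_pow, Nat.cast_choose_two]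
  nlinarith [mul_le_mul_of_nonneg_left h (by linarith : (0 : ℝ) ≤ q)]

theorem two_mul_log_add_le_mul_log_three {τ x R q : ℝ} (hτ : 4 / log 2 ≤ τ) (hx : 100 ≤ log x)
    (hR : τ * log x ≤ R) (hq : R ≤ 3 * q + 5) : 2 * log x + 3 * log 3 ≤ q * log 3 := by
  have ha := log_two_gt_d9
  have ha' := log_two_lt_d9
  have hb : log 3 < 2 * log 2 := by
    rw [← log_rpow zero_lt_two]; exact log_lt_log (by norm_num) (by norm_num)
  -- `4 / ln 2` suffices because `3 ^ 4 > 2 ^ 6`.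
  have hba : 17 / 81 ≤ 4 * log 3 - 6 * log 2 := by
    have := log_le_sub_one_of_pos (show (0 : ℝ) < 64 / 81 by norm_num)
    rw [show (64 / 81 : ℝ) = 2 ^ 6 / 3 ^ 4 by norm_num, log_div (by norm_num) (by norm_num),
      log_pow, log_pow] at this
    push_cast at this
    linarith
  have hRa : 4 * log x ≤ R * log 2 := by
    have := mul_le_mul_of_nonneg_right hτ (by linarith : 0 ≤ log x)
    rw [div_mul_eq_mul_div, div_le_iff₀ (by linarith)] at this
    linarith [mul_le_mul_of_nonneg_right hR (by linarith : (0 : ℝ) ≤ log 2)]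
  have hb0 : 0 < log 3 := by linarith
  have : 3 * log 2 * (2 * log x + 3 * log 3) ≤ 3 * log 2 * (q * log 3) := by
    have h₁ := mul_le_mul_of_nonneg_right hq (mul_pos (by linarith : (0 : ℝ) < log 2) hb0).le
    have h₂ := mul_le_mul_of_nonneg_right hRa hb0.le
    have h₃ := mul_le_mul hx hba (by norm_num) (by linarith)
    have h₄ : log 2 * log 3 ≤ 1 := by nlinarith
    linarith
  exact le_of_mul_le_mul_left this (by linarith)

end Estimates

end SuitableCore

open SuitableCore

/-- For each constant `τ ≥ 4 / ln 2` there exists `s₀ = s₀(τ)` such that an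
`((s+3)(s−1) + ⌈τ ln s⌉, s+3, 2s+1)`-suitable core exists for all `s ≥ s₀`. -/
theorem stmt0 (τ : ℝ) (hτ : 4 / Real.log 2 ≤ τ) :
    ∃ s₀ : ℕ, ∀ s : ℕ, s₀ ≤ s →
      SuitableCoreExists ((s + 3) * (s - 1) + ⌈τ * Real.log s⌉₊) (s + 3) (2 * s + 1) := by
  refine ⟨⌈Real.exp 100⌉₊, fun s hs => ?_⟩
  have hs₀ : Real.exp 100 ≤ s := Nat.ceil_le.1 hs
  have hs₁ : 0 < s := by exact_mod_cast (Real.exp_pos 100).trans_le hs₀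
  have hlog : 100 ≤ Real.log s := (Real.le_log_iff_exp_le (by positivity)).2 hs₀
  set R := ⌈τ * Real.log s⌉₊
  set q := (R - 3) / 3
  have hq : 2 * Real.log s + 3 * Real.log 3 ≤ q * Real.log 3 :=
    two_mul_log_add_le_mul_log_three hτ hlog (Nat.le_ceil _)
      (by exact_mod_cast (by omega : R ≤ 3 * q + 5))
  have hq₁ : 1 ≤ q := by
    refine Nat.one_le_iff_ne_zero.2 fun h => ?_
    rw [h, Nat.cast_zero, zero_mul] at hq
    linarith [Real.log_pos (by norm_num : (1 : ℝ) < 3)]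
  obtain ⟨c, hc⟩ := exists_coloring_forall_card_lt (α := Fin s) (κ := Fin 3) (q := q) (by
    simp only [Fintype.card_fin]
    exact (Nat.mul_le_mul_left 3 (Nat.choose_le_pow s q)).trans_lt
      (mul_pow_lt_pow_choose_two (by norm_num) hs₁ (by exact_mod_cast hq)))
  refine (suitableCoreExists_of_coloring hc).mono ?_
  have : s * s - s = s * (s - 1) := (Nat.mul_sub_one s s).symm
  rw [add_mul]
  omega
end

section
/- Suppose C is an (N,v,t)-suitable core. Then: (i) if v ≤ t, each symbol k ∈ {1,…,v} starts a row of C at least t+1−v times; (ii) if v ≤ t+1 and j, k are two distinct symbols each starting exactly t+1−v rows, then at least one row of C starts with j immediately followed by k; (iii) if v ≤ t+2, k is a symbol starting exactly t+2−v rows, and i, j are two other distinct symbols such that no row starts with ik and no row starts with jk, then at least one row starts with ijk or with jik. -/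
lemma below_mem {v : ℕ} (p : Equiv.Perm (Fin v)) (k : Fin v) (S : Finset (Fin v))
    (H : ∀ τ, τ ≠ k → τ ∉ S → p.symm k < p.symm τ)
    (m : Fin v) (hm : (m : ℕ) < ((p.symm k : Fin v) : ℕ)) : p m ∈ S := by
  by_contra h
  have hne : p m ≠ k := by
    intro he
    have h2 : p.symm k = m := by rw [← he, Equiv.symm_apply_apply]
    rw [h2] at hm; exact lt_irrefl _ hm
  have h3 := H (p m) hne h
  rw [Equiv.symm_apply_apply] at h3
  have := Fin.lt_def.mp h3
  omega

lemma pos_eq_of_apply {v : ℕ} (p : Equiv.Perm (Fin v)) (j : Fin v) (m : Fin v)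
    (h : p m = j) : (p.symm j : ℕ) = (m : ℕ) := by
  rw [← h, Equiv.symm_apply_apply]


/-- Basic facts about rows beginning with given symbols in an `(N,v,t)`-suitable core.
(`((C i).symm k).val = 0` says symbol `k` starts row `i`; values `1`, `2` mean second
and third position.) -/
theorem stmt5 (N v t : ℕ) (C : Fin N → Equiv.Perm (Fin v))
    (hC : IsSuitableCore N v t C) :
    ((v ≤ t → ∀ k : Fin v,
        t + 1 - v ≤ (Finset.univ.filter fun i : Fin N => ((C i).symm k).val = 0).card)
    ∧ (v ≤ t + 1 → ∀ j k : Fin v, j ≠ k →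
        (Finset.univ.filter fun i : Fin N => ((C i).symm j).val = 0).card = t + 1 - v →
        (Finset.univ.filter fun i : Fin N => ((C i).symm k).val = 0).card = t + 1 - v →
        ∃ i : Fin N, ((C i).symm j).val = 0 ∧ ((C i).symm k).val = 1)
    ∧ (v ≤ t + 2 → ∀ k i j : Fin v, i ≠ j → i ≠ k → j ≠ k →
        (Finset.univ.filter fun r : Fin N => ((C r).symm k).val = 0).card = t + 2 - v →
        (¬ ∃ r : Fin N, ((C r).symm i).val = 0 ∧ ((C r).symm k).val = 1) →
        (¬ ∃ r : Fin N, ((C r).symm j).val = 0 ∧ ((C r).symm k).val = 1) →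
        ∃ r : Fin N,
          (((C r).symm i).val = 0 ∧ ((C r).symm j).val = 1 ∧ ((C r).symm k).val = 2) ∨
          (((C r).symm j).val = 0 ∧ ((C r).symm i).val = 1 ∧ ((C r).symm k).val = 2))) := by
  refine ⟨?_, ?_, ?_⟩
  · intro hvt k

    have hv0 : 0 < v := k.pos
    set T : Finset (Fin v) := Finset.univ.erase k with hT
    have hTc : T.card = v - 1 := by
      rw [hT, Finset.card_erase_of_mem (Finset.mem_univ k), Finset.card_univ, Fintype.card_fin]
    have hmain := hC k T (Finset.notMem_erase k _) (by omega)
    have hsub : (Finset.univ.filter fun i : Fin N => ∀ τ ∈ T, (C i).symm k < (C i).symm τ)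
        ⊆ (Finset.univ.filter fun i : Fin N => ((C i).symm k).val = 0) := by
      intro r hr
      rw [Finset.mem_filter] at hr ⊢
      refine ⟨hr.1, ?_⟩
      by_contra h0
      have hm : ((⟨0, hv0⟩ : Fin v) : ℕ) < (((C r).symm k : Fin v) : ℕ) := by
        show (0:ℕ) < _; omega
      have := below_mem (C r) k ∅
        (fun τ hτ _ => hr.2 τ (Finset.mem_erase.mpr ⟨hτ, Finset.mem_univ τ⟩)) _ hm
      exact absurd this (Finset.notMem_empty _)
    have := Finset.card_le_card hsub
    omega
  · intro hvt j k hjk hj hk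

    have hv0 : 0 < v := k.pos
    have hv2 : 2 ≤ v := by
      have h := Fintype.one_lt_card_iff.mpr ⟨j, k, hjk⟩
      rwa [Fintype.card_fin] at h
    set T : Finset (Fin v) := (Finset.univ.erase j).erase k with hT
    have hTc : T.card = v - 2 := by
      rw [hT, Finset.card_erase_of_mem
          (Finset.mem_erase.mpr ⟨hjk.symm, Finset.mem_univ k⟩),
        Finset.card_erase_of_mem (Finset.mem_univ j), Finset.card_univ, Fintype.card_fin]
      omega
    have hmain := hC k T (Finset.notMem_erase k _) (by omega)
    set B : Finset (Fin N) :=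
      Finset.univ.filter (fun r : Fin N => ((C r).symm j).val = 0 ∧ ((C r).symm k).val = 1)
      with hB
    have hsub : (Finset.univ.filter fun r : Fin N => ∀ τ ∈ T, (C r).symm k < (C r).symm τ)
        ⊆ (Finset.univ.filter fun r : Fin N => ((C r).symm k).val = 0) ∪ B := by
      intro r hr
      rw [Finset.mem_filter] at hr
      rw [Finset.mem_union, Finset.mem_filter, hB, Finset.mem_filter]
      have H : ∀ τ, τ ≠ k → τ ∉ ({j} : Finset (Fin v)) → (C r).symm k < (C r).symm τ := by
        intro τ h1 h2
        exact hr.2 τ (Finset.mem_erase.mpr ⟨h1,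
          Finset.mem_erase.mpr ⟨by simpa using h2, Finset.mem_univ τ⟩⟩)
      by_cases h0 : ((C r).symm k).val = 0
      · exact Or.inl ⟨hr.1, h0⟩
      · have hm0 : ((⟨0, hv0⟩ : Fin v) : ℕ) < (((C r).symm k : Fin v) : ℕ) := by
          show (0:ℕ) < _; omega
        have hj0 := below_mem (C r) k {j} H _ hm0
        rw [Finset.mem_singleton] at hj0
        have hjpos := pos_eq_of_apply (C r) j _ hj0
        have hk1 : ((C r).symm k).val = 1 := by
          by_contra h1
          have hm1 : ((⟨1, by omega⟩ : Fin v) : ℕ) < (((C r).symm k : Fin v) : ℕ) := by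
            show (1:ℕ) < _; omega
          have hj1 := below_mem (C r) k {j} H _ hm1
          rw [Finset.mem_singleton] at hj1
          have := (C r).injective (hj0.trans hj1.symm)
          simp [Fin.ext_iff] at this
        exact Or.inr ⟨hr.1, by simpa using hjpos, hk1⟩
    have hcard := (Finset.card_le_card hsub).trans (Finset.card_union_le _ _)
    have hBpos : 0 < B.card := by omega
    obtain ⟨r, hr⟩ := Finset.card_pos.mp hBpos
    rw [hB, Finset.mem_filter] at hr
    exact ⟨r, hr.2⟩
  · intro hvt k i j hij hik hjk hk hi0 hj0

    have hv0 : 0 < v := k.pos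
    have hv3 : 3 ≤ v := by
      have h := Finset.card_le_univ ({i, j, k} : Finset (Fin v))
      rw [Finset.card_eq_three.mpr ⟨i, j, k, hij, hik, hjk, rfl⟩, Fintype.card_fin] at h
      exact h
    set T : Finset (Fin v) := ((Finset.univ.erase i).erase j).erase k with hT
    have hTc : T.card = v - 3 := by
      rw [hT,
        Finset.card_erase_of_mem (Finset.mem_erase.mpr
          ⟨hjk.symm, Finset.mem_erase.mpr ⟨hik.symm, Finset.mem_univ k⟩⟩),
        Finset.card_erase_of_mem (Finset.mem_erase.mpr ⟨hij.symm, Finset.mem_univ j⟩),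
        Finset.card_erase_of_mem (Finset.mem_univ i), Finset.card_univ, Fintype.card_fin]
      omega
    have hmain := hC k T (Finset.notMem_erase k _) (by omega)
    set D : Finset (Fin N) := Finset.univ.filter (fun r : Fin N =>
        (((C r).symm i).val = 0 ∧ ((C r).symm j).val = 1 ∧ ((C r).symm k).val = 2) ∨
        (((C r).symm j).val = 0 ∧ ((C r).symm i).val = 1 ∧ ((C r).symm k).val = 2))
      with hD
    have hsub : (Finset.univ.filter fun r : Fin N => ∀ τ ∈ T, (C r).symm k < (C r).symm τ)
        ⊆ (Finset.univ.filter fun r : Fin N => ((C r).symm k).val = 0) ∪ D := by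
      intro r hr
      rw [Finset.mem_filter] at hr
      rw [Finset.mem_union, Finset.mem_filter, hD, Finset.mem_filter]
      have H : ∀ τ, τ ≠ k → τ ∉ ({i, j} : Finset (Fin v)) → (C r).symm k < (C r).symm τ := by
        intro τ h1 h2
        rw [Finset.mem_insert, Finset.mem_singleton] at h2
        push_neg at h2
        exact hr.2 τ (Finset.mem_erase.mpr ⟨h1, Finset.mem_erase.mpr ⟨h2.2,
          Finset.mem_erase.mpr ⟨h2.1, Finset.mem_univ τ⟩⟩⟩)
      by_cases h0 : ((C r).symm k).val = 0
      · exact Or.inl ⟨hr.1, h0⟩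
      right
      refine ⟨hr.1, ?_⟩
      have hm0 : ((⟨0, hv0⟩ : Fin v) : ℕ) < (((C r).symm k : Fin v) : ℕ) := by
        show (0:ℕ) < _; omega
      have hp0 := below_mem (C r) k {i, j} H _ hm0
      rw [Finset.mem_insert, Finset.mem_singleton] at hp0
      have hk1 : ((C r).symm k).val ≠ 1 := by
        intro h1
        rcases hp0 with hpi | hpj
        · exact hi0 ⟨r, by simpa using pos_eq_of_apply (C r) i _ hpi, h1⟩
        · exact hj0 ⟨r, by simpa using pos_eq_of_apply (C r) j _ hpj, h1⟩
      have hm1 : ((⟨1, by omega⟩ : Fin v) : ℕ) < (((C r).symm k : Fin v) : ℕ) := by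
        show (1:ℕ) < _; omega
      have hp1 := below_mem (C r) k {i, j} H _ hm1
      rw [Finset.mem_insert, Finset.mem_singleton] at hp1
      have hk2 : ((C r).symm k).val = 2 := by
        by_contra h2
        have hm2 : ((⟨2, by omega⟩ : Fin v) : ℕ) < (((C r).symm k : Fin v) : ℕ) := by
          show (2:ℕ) < _; omega
        have hp2 := below_mem (C r) k {i, j} H _ hm2
        rw [Finset.mem_insert, Finset.mem_singleton] at hp2
        rcases hp0 with h | h <;> rcases hp1 with h' | h' <;> rcases hp2 with h'' | h'' <;>
          first
          | (have := (C r).injective (h.trans h'.symm); simp [Fin.ext_iff] at this)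
          | (have := (C r).injective (h.trans h''.symm); simp [Fin.ext_iff] at this)
          | (have := (C r).injective (h'.trans h''.symm); simp [Fin.ext_iff] at this)
      rcases hp0 with hpi | hpj
      · have hp1j : (C r) ⟨1, by omega⟩ = j := by
          rcases hp1 with h' | h'
          · have := (C r).injective (hpi.trans h'.symm); simp [Fin.ext_iff] at this
          · exact h'
        exact Or.inl ⟨by simpa using pos_eq_of_apply (C r) i _ hpi,
          by simpa using pos_eq_of_apply (C r) j _ hp1j, hk2⟩
      · have hp1i : (C r) ⟨1, by omega⟩ = i := by
          rcases hp1 with h' | h'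
          · exact h'
          · have := (C r).injective (hpj.trans h'.symm); simp [Fin.ext_iff] at this
        exact Or.inr ⟨by simpa using pos_eq_of_apply (C r) j _ hpj,
          by simpa using pos_eq_of_apply (C r) i _ hp1i, hk2⟩
    have hcard := (Finset.card_le_card hsub).trans (Finset.card_union_le _ _)
    have hDpos : 0 < D.card := by omega
    obtain ⟨r, hr⟩ := Finset.card_pos.mp hDpos
    rw [hD, Finset.mem_filter] at hr
    exact ⟨r, hr.2⟩
end

section
/- Suppose C is an (N,v,t)-suitable core over {1,…,v} with v ≤ t+1. Let R be the set of symbols that start a row of C more than t+1−v times, and for each i ∈ {1,…,v} let B_i be the set of symbols j ≠ i such that no row of C starts with i immediately followed by j. Then B_i ⊆ R for every i ∈ {1,…,v}, and |B_i| ≥ 2v−t−2 for every i ∈ {1,…,v}∖R. -/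
open Finset

section Permutation

variable {w : ℕ} (p : Equiv.Perm (Fin w)) {i j : Fin w}

lemma val_symm_eq_zero_or_of_forall_lt_eq (h : ∀ τ, p.symm τ < p.symm j → τ = i) :
    (p.symm j).val = 0 ∨ ((p.symm i).val = 0 ∧ (p.symm j).val = 1) := by
  rcases Nat.eq_zero_or_pos (p.symm j).val with hj0 | hj0
  · exact Or.inl hj0
  have hw : 0 < w := (p.symm j).pos
  have hi0 : p ⟨0, hw⟩ = i := h _ (by simpa [Fin.lt_def] using hj0)
  have hj1 : (p.symm j).val = 1 := by
    by_contra hj1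
    have hw1 : 1 < w := by omega
    have hi1 : p ⟨1, hw1⟩ = i := h _ (by simp [Fin.lt_def]; omega)
    simpa using p.injective (hi0.trans hi1.symm)
  exact Or.inr ⟨by simp [← hi0], hj1⟩

lemma forall_lt_eq_of_forall_erase_erase_lt
    (h : ∀ τ ∈ (univ.erase i).erase j, p.symm j < p.symm τ) :
    ∀ τ, p.symm τ < p.symm j → τ = i := by
  intro τ hτ
  by_contra hτi
  have hτj : τ ≠ j := by rintro rfl; exact lt_irrefl _ hτ
  exact lt_asymm hτ (h τ (by simp [hτi, hτj]))

end Permutation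

lemma card_sub_one_le_card_filter_ne_not_add {α : Type*} [Fintype α] [DecidableEq α] (i : α)
    (P : α → Prop) [DecidablePred P] :
    Fintype.card α - 1 ≤ (univ.filter fun j => j ≠ i ∧ ¬ P j).card + (univ.filter P).card := by
  calc Fintype.card α - 1 = (univ.erase i).card := by
        rw [card_erase_of_mem (mem_univ i), card_univ]
    _ ≤ ((univ.filter fun j => j ≠ i ∧ ¬ P j) ∪ univ.filter P).card :=
      card_le_card fun j hj => by by_cases P j <;> simp_all
    _ ≤ _ := card_union_le _ _

section Family

variable {ι : Type*} [Fintype ι] {w : ℕ} (C : ι → Equiv.Perm (Fin w))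

lemma card_precedes_erase_erase_le_card_starts
    {i j : Fin w} (hij : ¬ ∃ r, ((C r).symm i).val = 0 ∧ ((C r).symm j).val = 1) :
    (univ.filter fun r => ∀ τ ∈ (univ.erase i).erase j, (C r).symm j < (C r).symm τ).card ≤
      (univ.filter fun r => ((C r).symm j).val = 0).card := by
  refine card_le_card fun r hr => ?_
  simp only [mem_filter, mem_univ, true_and] at hr ⊢
  have := val_symm_eq_zero_or_of_forall_lt_eq (C r) (forall_lt_eq_of_forall_erase_erase_lt _ hr)
  exact this.resolve_right fun h => hij ⟨r, h⟩

lemma card_seconds_le_card_starts (i : Fin w) :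
    (univ.filter fun j => ∃ r, ((C r).symm i).val = 0 ∧ ((C r).symm j).val = 1).card ≤
      (univ.filter fun r => ((C r).symm i).val = 0).card := by
  by_cases hw : 1 < w
  · refine card_le_card_of_surjOn (fun r => C r ⟨1, hw⟩) fun j hj => ?_
    simp only [coe_filter, mem_univ, true_and, Set.mem_ofPred_eq] at hj
    obtain ⟨r, hi, hj⟩ := hj
    exact ⟨r, by simpa using hi, by simp [← hj]⟩
  · refine (card_eq_zero.mpr (filter_eq_empty_iff.mpr fun j _ ⟨r, _, hj⟩ => ?_)).trans_le
      (Nat.zero_le _)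
    have := ((C r).symm j).isLt
    omega

end Family

/-- In an `(N,v,t)`-suitable core with `v ≤ t+1`: if `R` is the set of symbols starting
more than `t+1−v` rows and `B i` is the set of symbols `j ≠ i` such that no row starts
with `i` immediately followed by `j`, then `B i ⊆ R` for all `i`, and
`|B i| ≥ 2v−t−2` for all `i ∉ R`. -/
theorem stmt6 (N v t : ℕ) (C : Fin N → Equiv.Perm (Fin v)) (hvt : v ≤ t + 1)
    (hC : IsSuitableCore N v t C)
    (R : Finset (Fin v))
    (hR : R = Finset.univ.filter fun k : Fin v =>
      t + 1 - v < (Finset.univ.filter fun i : Fin N => ((C i).symm k).val = 0).card)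
    (B : Fin v → Finset (Fin v))
    (hB : ∀ i : Fin v, B i = Finset.univ.filter fun j : Fin v =>
      j ≠ i ∧ ¬ ∃ row : Fin N, ((C row).symm i).val = 0 ∧ ((C row).symm j).val = 1) :
    (∀ i : Fin v, B i ⊆ R) ∧
    (∀ i : Fin v, i ∉ R → 2 * (v : ℤ) - t - 2 ≤ ((B i).card : ℤ)) := by
  subst hR
  constructor
  · intro i j hj
    simp only [hB, mem_filter, mem_univ, true_and] at hj ⊢
    obtain ⟨hji, hij⟩ := hj
    have hT : ((univ.erase i).erase j).card = v - 2 := by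
      rw [card_erase_of_mem (by simp [hji]), card_erase_of_mem (mem_univ _), card_univ,
        Fintype.card_fin]
      omega
    have hprec := hC j ((univ.erase i).erase j) (notMem_erase _ _) (by omega)
    have := card_precedes_erase_erase_le_card_starts C hij
    omega
  · intro i hi
    simp only [mem_filter, mem_univ, true_and, not_lt] at hi
    have hsplit := card_sub_one_le_card_filter_ne_not_add i
      fun j => ∃ r, ((C r).symm i).val = 0 ∧ ((C r).symm j).val = 1
    have hseconds : (univ.filter fun j =>
        ∃ r, ((C r).symm i).val = 0 ∧ ((C r).symm j).val = 1).card ≤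
        (univ.filter fun r => ((C r).symm i).val = 0).card := by
      -- only the `Decidable` instances of `∃ r : Fin N` differ
      convert card_seconds_le_card_starts C i
    rw [Fintype.card_fin, ← hB] at hsplit
    omega
end

section
/- If there exists an (N, v, t)-suitable core with N > v(t+1−v), then there exists an (N+v−1, v, t+1)-suitable core. (Equivalently, if SCN(t,N) ≥ v and N > v(t+1−v), then SCN(t+1, N+v−1) ≥ v.) -/
/-- If an `(N, v, t)`-suitable core exists and `N > v(t+1−v)`, then an
`(N+v−1, v, t+1)`-suitable core exists. -/
theorem stmt7 (N v t : ℕ) (hN : 0 < N) (hv : 0 < v) (ht : 0 < t)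
    (h : SuitableCoreExists N v t) (hgt : (v : ℤ) * ((t : ℤ) + 1 - v) < N) :
    SuitableCoreExists (N + v - 1) v (t + 1) := by
  classical
  obtain ⟨C, hC⟩ := h
  set z0 : Fin v := ⟨0, hv⟩ with hz0
  set f : Fin v → ℕ := fun σ => (Finset.univ.filter fun i : Fin N => (C i).symm σ = z0).card with hf
  have hsum : ∑ σ : Fin v, f σ = N := by
    simp only [hf, Finset.card_filter]
    rw [Finset.sum_comm]
    have hinner : ∀ i : Fin N, (∑ σ : Fin v, if (C i).symm σ = z0 then 1 else 0) = 1 := by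
      intro i
      simp only [Equiv.symm_apply_eq]
      rw [Finset.sum_ite_eq' Finset.univ (C i z0) (fun _ => 1)]
      simp
    simp [hinner]
  have hpig : ∃ σ₀ : Fin v, N ≤ v * f σ₀ := by
    by_contra hcon
    push_neg at hcon
    have h1 : ∑ σ : Fin v, v * f σ < ∑ σ : Fin v, N := by
      apply Finset.sum_lt_sum_of_nonempty ⟨z0, Finset.mem_univ _⟩
      intro σ _; exact hcon σ
    rw [← Finset.mul_sum, hsum, Finset.sum_const, Finset.card_univ, Fintype.card_fin,
      smul_eq_mul] at h1
    omega
  obtain ⟨σ₀, hσ₀⟩ := hpig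
  have fb : t + 2 ≤ f σ₀ + v := by
    have h1 : (v:ℤ) * ((t:ℤ) + 1 - v) < (v:ℤ) * (f σ₀) :=
      lt_of_lt_of_le hgt (by exact_mod_cast hσ₀)
    have h2 : (t:ℤ) + 1 - v < (f σ₀ : ℤ) :=
      lt_of_mul_lt_mul_left h1 (by positivity)
    omega
  -- the map g enumerating symbols other than σ₀
  have hg : ∃ g : Fin (v-1) → Fin v, (∀ j, g j ≠ σ₀) ∧ (∀ b, b ≠ σ₀ → ∃ j, g j = b) := by
    refine ⟨fun j => if h : (j:ℕ) < (σ₀:ℕ) then ⟨j, lt_of_lt_of_le j.isLt (Nat.sub_le v 1)⟩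
      else ⟨(j:ℕ)+1, by have := j.isLt; omega⟩, ?_, ?_⟩
    · intro j hcon
      have := congrArg Fin.val hcon
      by_cases h : (j:ℕ) < (σ₀:ℕ) <;> simp [h] at this <;> omega
    · intro b hb
      by_cases hlt : (b:ℕ) < (σ₀:ℕ)
      · refine ⟨⟨(b:ℕ), by have := σ₀.isLt; omega⟩, ?_⟩
        apply Fin.ext; simp [hlt]
      · have hgtb : (σ₀:ℕ) < (b:ℕ) := by
          rcases Nat.lt_or_ge (σ₀:ℕ) (b:ℕ) with h | h
          · exact h
          · exfalso; apply hb; apply Fin.ext; omega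
        refine ⟨⟨(b:ℕ)-1, by have := b.isLt; omega⟩, ?_⟩
        apply Fin.ext
        have hnlt : ¬ ((b:ℕ)-1 < (σ₀:ℕ)) := by omega
        simp [hnlt]; omega
  obtain ⟨g, hgne, hgsurj⟩ := hg
  -- the new rows
  have hPj : ∀ j : Fin (v-1), ∃ p : Equiv.Perm (Fin v),
      p.symm (g j) = z0 ∧ ((p.symm σ₀ : Fin v) : ℕ) = 1 := by
    intro j
    have hv2 : 1 < v := by have := j.isLt; omega
    set z1 : Fin v := ⟨1, hv2⟩ with hz1
    set q : Equiv.Perm (Fin v) := Equiv.swap z0 (g j) with hq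
    set p : Equiv.Perm (Fin v) := (Equiv.swap z1 (q.symm σ₀)).trans q with hp
    have hq0 : q z0 = g j := Equiv.swap_apply_left _ _
    have hy : q.symm σ₀ ≠ z0 := by
      intro hcon
      apply hgne j
      have : q (q.symm σ₀) = q z0 := by rw [hcon]
      rw [Equiv.apply_symm_apply, hq0] at this
      exact this.symm
    have h01 : z0 ≠ z1 := by
      intro hcon; have := congrArg Fin.val hcon; simp [hz0, hz1] at this
    have hp0 : p z0 = g j := by
      have hfix : Equiv.swap z1 (q.symm σ₀) z0 = z0 :=
        Equiv.swap_apply_of_ne_of_ne h01 (Ne.symm hy)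
      simp only [hp, Equiv.trans_apply, hfix, hq0]
    have hp1 : p z1 = σ₀ := by
      simp only [hp, Equiv.trans_apply, Equiv.swap_apply_left, Equiv.apply_symm_apply]
    refine ⟨p, ?_, ?_⟩
    · rw [← hp0, Equiv.symm_apply_apply]
    · rw [← hp1, Equiv.symm_apply_apply]
  choose P hP0 hP1 using hPj
  rw [show N + v - 1 = N + (v-1) by omega]
  set D : Fin (N + (v-1)) → Equiv.Perm (Fin v) :=
    Fin.addCases (motive := fun _ => Equiv.Perm (Fin v)) C P with hD
  refine ⟨D, ?_⟩
  intro σ T hσT hTcard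
  have key : (Finset.univ.filter fun i : Fin (N+(v-1)) =>
        ∀ τ ∈ T, (D i).symm σ < (D i).symm τ).card
      = (Finset.univ.filter fun i : Fin N => ∀ τ ∈ T, (C i).symm σ < (C i).symm τ).card
      + (Finset.univ.filter fun j : Fin (v-1) => ∀ τ ∈ T, (P j).symm σ < (P j).symm τ).card := by
    simp only [hD, Finset.card_filter, Fin.sum_univ_add, Fin.addCases_left, Fin.addCases_right]
  rw [key]
  set A := (Finset.univ.filter fun i : Fin N => ∀ τ ∈ T, (C i).symm σ < (C i).symm τ).card with hA
  set B := (Finset.univ.filter fun j : Fin (v-1) => ∀ τ ∈ T, (P j).symm σ < (P j).symm τ).card with hB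
  have hsle : T.card ≤ v - 1 := by
    have hsub : T ⊆ Finset.univ.erase σ := by
      intro τ hτ
      refine Finset.mem_erase.mpr ⟨?_, Finset.mem_univ _⟩
      intro hcon; exact hσT (hcon ▸ hτ)
    have := Finset.card_le_card hsub
    rwa [Finset.card_erase_of_mem (Finset.mem_univ _), Finset.card_univ, Fintype.card_fin] at this
  have hBpos : (∃ j : Fin (v-1), ∀ τ ∈ T, (P j).symm σ < (P j).symm τ) → 1 ≤ B := by
    rintro ⟨j, hj⟩
    exact Finset.card_pos.mpr ⟨j, Finset.mem_filter.mpr ⟨Finset.mem_univ _, hj⟩⟩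
  by_cases hσeq : σ = σ₀
  · subst hσeq
    have hA2 : f σ ≤ A := by
      apply Finset.card_le_card
      intro i hi
      rw [Finset.mem_filter] at hi ⊢
      refine ⟨Finset.mem_univ _, ?_⟩
      intro τ hτ
      rw [hi.2]
      have hne : (C i).symm τ ≠ z0 := by
        intro hcon
        have := (C i).symm.injective (hcon.trans hi.2.symm)
        exact hσT (this ▸ hτ)
      have : ((C i).symm τ : ℕ) ≠ 0 := by
        intro h0; exact hne (Fin.ext (by simp [hz0, h0]))
      rw [Fin.lt_def]; simp [hz0]; omega
    by_cases hcase : T.card < v - 1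
    · -- there is a symbol outside T ∪ {σ}
      have hex : ∃ b : Fin v, b ∉ insert σ T := by
        by_contra hcon
        push_neg at hcon
        have : (Finset.univ : Finset (Fin v)) ⊆ insert σ T := fun b _ => hcon b
        have := Finset.card_le_card this
        rw [Finset.card_univ, Fintype.card_fin] at this
        have := Finset.card_insert_le σ T
        omega
      obtain ⟨b, hb⟩ := hex
      rw [Finset.mem_insert] at hb
      push_neg at hb
      obtain ⟨j, hj⟩ := hgsurj b (fun hc => hb.1 hc)
      have hQ : ∀ τ ∈ T, (P j).symm σ < (P j).symm τ := by
        intro τ hτ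
        have hval1 : (((P j).symm σ : Fin v) : ℕ) = 1 := hP1 j
        have hτne0 : (P j).symm τ ≠ z0 := by
          intro hcon
          have : τ = g j := (P j).symm.injective (hcon.trans (hP0 j).symm)
          rw [hj] at this
          exact hb.2 (this ▸ hτ)
        have hτneσ : (P j).symm τ ≠ (P j).symm σ := by
          intro hcon
          have := (P j).symm.injective hcon
          exact hσT (this ▸ hτ)
        have h1 : (((P j).symm τ : Fin v) : ℕ) ≠ 0 := by
          intro h0; exact hτne0 (Fin.ext (by simp [hz0, h0]))
        have h2 : (((P j).symm τ : Fin v) : ℕ) ≠ 1 := by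
          intro h1'; exact hτneσ (Fin.ext (by rw [h1', hval1]))
        rw [Fin.lt_def, hval1]; omega
      have hB1 := hBpos ⟨j, hQ⟩
      by_cases hst : T.card < t
      · have hA1 := hC σ T hσT hst
        rw [← hA] at hA1
        omega
      · omega
    · -- T.card = v - 1; use the pigeonhole bound
      omega
  · -- σ ≠ σ₀ : there is a new row with σ first
    obtain ⟨j, hj⟩ := hgsurj σ hσeq
    have hQ : ∀ τ ∈ T, (P j).symm σ < (P j).symm τ := by
      intro τ hτ
      have h0 : (P j).symm σ = z0 := by rw [← hj]; exact hP0 j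
      rw [h0]
      have hne : (P j).symm τ ≠ z0 := by
        intro hcon
        have := (P j).symm.injective (hcon.trans h0.symm)
        exact hσT (this ▸ hτ)
      have : (((P j).symm τ : Fin v) : ℕ) ≠ 0 := by
        intro hz; exact hne (Fin.ext (by simp [hz0, hz]))
      rw [Fin.lt_def]; simp [hz0]; omega
    have hB1 := hBpos ⟨j, hQ⟩
    by_cases hst : T.card < t
    · have hA1 := hC σ T hσT hst
      rw [← hA] at hA1
      omega
    · omega
end

section
/- For every integer s ≥ 1 and every positive integer l satisfying C(l,3) ≥ s+3 and l ≤ s+3, there exists an (N, s+3, 2s+1)-suitable core with N = (s+3)(s−1) + l. -/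
open Finset

namespace SuitableCore

variable {w N t : ℕ}

lemma _root_.Nat.sub_one_le_choose_two (n : ℕ) : n - 1 ≤ n.choose 2 := by
  cases n with
  | zero => simp
  | succ n => rw [Nat.choose_succ_succ', Nat.choose_one_right]; omega

lemma suitableCoreExists_of_finset {β : Type*} (E : Finset β) (hE : #E ≤ N)
    (R : β → Equiv.Perm (Fin w))
    (hR : ∀ (σ : Fin w) (T : Finset (Fin w)), σ ∉ T → #T < t →
      t - #T ≤ #{p ∈ E | ∀ τ ∈ T, (R p).symm σ < (R p).symm τ}) :
    SuitableCoreExists N w t := by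
  obtain ⟨e⟩ : Nonempty (E ↪ Fin N) :=
    Function.Embedding.nonempty_of_card_le (by simpa using hE)
  refine ⟨Function.extend e (fun p => R p) 1, fun σ T hσT hT => (hR σ T hσT hT).trans ?_⟩
  calc #{p ∈ E | ∀ τ ∈ T, (R p).symm σ < (R p).symm τ}
      ≤ #{p : E | ∀ τ ∈ T, (R p).symm σ < (R p).symm τ} :=
        card_le_card_of_surjOn Subtype.val fun p hp => by simp_all
    _ ≤ _ := card_le_card_of_injOn e (fun p hp => by simpa [e.injective.extend_apply] using hp)
        e.injective.injOn

def StartsWith (π : Equiv.Perm (Fin w)) (L : List (Fin w)) : Prop :=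
  ∀ i (hi : i < L.length), (π.symm L[i] : ℕ) = i

lemma exists_startsWith {L : List (Fin w)} (hL : L.Nodup) :
    ∃ π : Equiv.Perm (Fin w), StartsWith π L := by
  set L' := L ++ (univ.filter (· ∉ L)).toList
  have hnd : L'.Nodup :=
    hL.append (nodup_toList _) (fun x hx hx' => by simp_all)
  have hall : ∀ x, x ∈ L' := fun x => by by_cases hx : x ∈ L <;> simp [L', hx]
  let e := hnd.getEquivOfForallMemList L' hall
  have hlen : L'.length = w := by simpa using Fintype.card_congr e
  refine ⟨(finCongr hlen).symm.trans e, fun i hi => ?_⟩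
  have : L[i] = e ⟨i, by rw [List.length_append]; omega⟩ := by
    simp [e, L', List.getElem_append_left hi]
  simp [this]

lemma StartsWith.symm_lt {π : Equiv.Perm (Fin w)} {L : List (Fin w)} (h : StartsWith π L)
    {T : Finset (Fin w)} {k : ℕ} (hk : k < L.length) (hkT : L[k] ∉ T)
    (hpre : ∀ x ∈ L.take k, x ∉ T) : ∀ τ ∈ T, π.symm L[k] < π.symm τ := by
  intro τ hτ
  by_contra hle
  rw [not_lt, Fin.le_def, h k hk] at hle
  have hτ' : L[(π.symm τ : ℕ)] = τ := π.symm.injective (Fin.ext (h _ _))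
  rcases hle.lt_or_eq with hlt | heq
  · refine hpre _ (List.mem_take_iff_getElem.mpr ⟨_, by omega, hτ'⟩) hτ
  · subst heq
    exact hkT (by rwa [hτ'])

section Scheme

variable {α : Type*} [DecidableEq α]

/-- `S x` is the set of symbols that may not directly follow `x` at the start of a row. -/
structure IsCoreScheme (S : α → Finset α) : Prop where
  notMem_self : ∀ x, x ∉ S x
  card_inter_le : ∀ a b, a ≠ b →
    #(S a ∩ S b) ≤ (if b ∈ S a then 0 else 1) + (if a ∈ S b then 0 else 1)
  card_le : ∀ x, #(S x) ≤ 2 ∨ #(S x) ≤ 3 ∧ ∀ y, x ∉ S y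

lemma IsCoreScheme.map {β : Type*} [DecidableEq β] {S : α → Finset α} (hS : IsCoreScheme S)
    (e : α ≃ β) : IsCoreScheme fun y => (S (e.symm y)).map e.toEmbedding := by
  refine ⟨fun y => ?_, fun a b hab => ?_, fun y => ?_⟩
  · simpa using hS.notMem_self (e.symm y)
  · simpa [← map_inter] using hS.card_inter_le _ _ (e.symm.injective.ne hab)
  · exact (hS.card_le (e.symm y)).imp (by simp)
      fun h => ⟨by simpa using h.1, fun z => by simpa using h.2 (e.symm z)⟩

end Scheme

section Rows

variable (S : Fin w → Finset (Fin w))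

def rowEdges : Finset (Fin w × Fin w) := {p | p.1 ≠ p.2 ∧ p.2 ∉ S p.1}

/-- If both `(a, b)` and `(b, a)` are edges, the one starting with the smaller symbol takes the
smallest element of `S a ∩ S b` and the other one the next; so by `IsCoreScheme.card_inter_le`
every element of `S a ∩ S b` is the third symbol of a row on `{a, b}`. -/
def thirdSymbol (p : Fin w × Fin w) : Option (Fin w) :=
  (S p.1 ∩ S p.2).sort[if (p.2, p.1) ∈ rowEdges S ∧ p.2 < p.1 then 1 else 0]?

def rowPrefix (p : Fin w × Fin w) : List (Fin w) := p.1 :: p.2 :: (thirdSymbol S p).toList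

variable {S}

lemma mem_of_thirdSymbol_eq_some {p : Fin w × Fin w} {c : Fin w}
    (h : thirdSymbol S p = some c) : c ∈ S p.1 ∧ c ∈ S p.2 := by
  simpa using List.mem_of_getElem? h

lemma exists_thirdSymbol_eq_some (hS : IsCoreScheme S) {a b σ : Fin w} (hab : a ≠ b)
    (ha : σ ∈ S a) (hb : σ ∈ S b) :
    ∃ p ∈ rowEdges S, ({p.1, p.2} : Finset (Fin w)) = {a, b} ∧ thirdSymbol S p = some σ := by
  wlog hlt : a < b generalizing a b
  · obtain ⟨p, hp, hpair, h3⟩ := this hab.symm hb ha (hab.lt_or_gt.resolve_left hlt)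
    exact ⟨p, hp, hpair.trans (pair_comm _ _), h3⟩
  have hσ : σ ∈ (S a ∩ S b).sort := (mem_sort _).mpr (mem_inter.mpr ⟨ha, hb⟩)
  obtain ⟨j, hj, hjσ⟩ := List.mem_iff_getElem.mp hσ
  have hbound := hS.card_inter_le a b hab
  rw [length_sort] at hj
  have hba : (b, a) ∈ rowEdges S ↔ a ∉ S b := by simp [rowEdges, hab.symm]
  have hab' : (a, b) ∈ rowEdges S ↔ b ∉ S a := by simp [rowEdges, hab]
  obtain rfl | rfl | hj2 : j = 0 ∨ j = 1 ∨ 2 ≤ j := by omega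
  · by_cases hbSa : b ∈ S a
    · have haSb : a ∉ S b := fun h => by simp only [hbSa, h, if_true] at hbound; omega
      refine ⟨(b, a), hba.mpr haSb, pair_comm _ _, ?_⟩
      simpa [thirdSymbol, hab'.not.mpr (not_not.mpr hbSa), inter_comm] using
        List.getElem?_eq_some_iff.mpr ⟨_, hjσ⟩
    · refine ⟨(a, b), hab'.mpr hbSa, rfl, ?_⟩
      simpa [thirdSymbol, hlt.not_gt] using List.getElem?_eq_some_iff.mpr ⟨_, hjσ⟩
  · obtain ⟨hbSa, haSb⟩ : b ∉ S a ∧ a ∉ S b := by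
      split_ifs at hbound <;> first | omega | exact ⟨‹_›, ‹_›⟩
    refine ⟨(b, a), hba.mpr haSb, pair_comm _ _, ?_⟩
    simpa [thirdSymbol, hab'.mpr hbSa, hlt, inter_comm] using
      List.getElem?_eq_some_iff.mpr ⟨_, hjσ⟩
  · split_ifs at hbound <;> omega

lemma rowPrefix_nodup (hS : IsCoreScheme S) {p : Fin w × Fin w} (hp : p ∈ rowEdges S) :
    (rowPrefix S p).Nodup := by
  have hp' : p.1 ≠ p.2 := (mem_filter.mp hp).2.1
  cases h : thirdSymbol S p with
  | none => simpa [rowPrefix, h] using hp'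
  | some c =>
    have ⟨h1, h2⟩ := mem_of_thirdSymbol_eq_some h
    have hc1 : p.1 ≠ c := fun e => hS.notMem_self _ (e ▸ h1)
    have hc2 : p.2 ≠ c := fun e => hS.notMem_self _ (e ▸ h2)
    simp [rowPrefix, h, hp', hc1, hc2]

lemma card_rowEdges_filter_fst (hS : IsCoreScheme S) (x : Fin w) :
    #{p ∈ rowEdges S | p.1 = x} = w - 1 - #(S x) := by
  have : {p ∈ rowEdges S | p.1 = x} = {x} ×ˢ (insert x (S x))ᶜ := by
    ext ⟨a, b⟩
    simp only [rowEdges, mem_filter, mem_univ, true_and, mem_product, mem_singleton, mem_compl,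
      mem_insert]
    constructor
    · rintro ⟨⟨hab, hb⟩, rfl⟩
      exact ⟨rfl, by tauto⟩
    · rintro ⟨rfl, hb⟩
      exact ⟨⟨fun h => hb (.inl h.symm), fun h => hb (.inr h)⟩, rfl⟩
  rw [this, card_product, card_singleton, one_mul, card_compl,
    card_insert_of_notMem (hS.notMem_self x), Fintype.card_fin]
  omega

lemma card_rowEdges (hS : IsCoreScheme S) : #(rowEdges S) = ∑ x, (w - 1 - #(S x)) := by
  rw [card_eq_sum_card_fiberwise (f := Prod.fst) (t := univ) (fun _ _ => mem_univ _)]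
  exact sum_congr rfl fun x _ => card_rowEdges_filter_fst hS x

lemma card_le_card_filter_snd_eq {σ : Fin w} {U : Finset (Fin w)} (hσU : σ ∉ U) :
    #{x ∈ U | σ ∉ S x} ≤ #{p ∈ rowEdges S | p.2 = σ ∧ p.1 ∈ U} := by
  refine card_le_card_of_injOn (·, σ) (fun x hx => ?_) (fun x _ y _ h => by simpa using h)
  have hx := mem_filter.mp hx
  have hxσ : x ≠ σ := fun h => hσU (h ▸ hx.1)
  simp [rowEdges, hx, hxσ]

lemma choose_two_le_card_filter_thirdSymbol_eq (hS : IsCoreScheme S) (σ : Fin w)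
    (U : Finset (Fin w)) :
    (#{x ∈ U | σ ∈ S x}).choose 2 ≤
      #{p ∈ rowEdges S | thirdSymbol S p = some σ ∧ p.1 ∈ U ∧ p.2 ∈ U} := by
  rw [← card_powersetCard]
  refine card_le_card_of_surjOn (fun p => {p.1, p.2}) fun P hP => ?_
  obtain ⟨hPsub, hPcard⟩ := mem_powersetCard.mp hP
  obtain ⟨a, b, hab, rfl⟩ := card_eq_two.mp hPcard
  have ha := mem_filter.mp (hPsub (mem_insert_self a {b}))
  have hb := mem_filter.mp (hPsub (mem_insert_of_mem (mem_singleton_self b)))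
  obtain ⟨p, hp, hpab, h3⟩ := exists_thirdSymbol_eq_some hS hab ha.2 hb.2
  have hpU : p.1 ∈ U ∧ p.2 ∈ U := by
    have : ∀ x ∈ ({p.1, p.2} : Finset (Fin w)), x ∈ U := by simp [hpab, ha.1, hb.1]
    simpa using this
  exact ⟨p, mem_filter.mpr ⟨hp, h3, hpU⟩, hpab⟩

variable {R : Fin w × Fin w → Equiv.Perm (Fin w)}

lemma precedes_of_mem_rowEdges (hR : ∀ p ∈ rowEdges S, StartsWith (R p) (rowPrefix S p))
    {p : Fin w × Fin w} (hp : p ∈ rowEdges S) {σ : Fin w} {T : Finset (Fin w)} (hσT : σ ∉ T)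
    (h : p.1 = σ ∨ p.2 = σ ∧ p.1 ∉ T ∨ thirdSymbol S p = some σ ∧ p.1 ∉ T ∧ p.2 ∉ T) :
    ∀ τ ∈ T, (R p).symm σ < (R p).symm τ := by
  rcases h with rfl | ⟨rfl, h1⟩ | ⟨h3, h1, h2⟩
  · exact (hR p hp).symm_lt (k := 0) (by simp [rowPrefix]) hσT (by simp)
  · exact (hR p hp).symm_lt (k := 1) (by simp [rowPrefix]) hσT (by simpa [rowPrefix])
  · simpa [rowPrefix, h3] using (hR p hp).symm_lt (k := 2) (by simp [rowPrefix, h3])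
      (by simpa [rowPrefix, h3]) (by simp [rowPrefix, h1, h2])

lemma card_filter_precedes_ge (hS : IsCoreScheme S)
    (hR : ∀ p ∈ rowEdges S, StartsWith (R p) (rowPrefix S p)) {σ : Fin w} {T : Finset (Fin w)}
    (hσT : σ ∉ T) :
    w - 1 - #(S σ) + #{x ∈ (insert σ T)ᶜ | σ ∉ S x} + (#{x ∈ (insert σ T)ᶜ | σ ∈ S x}).choose 2 ≤
      #{p ∈ rowEdges S | ∀ τ ∈ T, (R p).symm σ < (R p).symm τ} := by
  set U := (insert σ T)ᶜ
  set G1 := {p ∈ rowEdges S | p.1 = σ}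
  set G2 := {p ∈ rowEdges S | p.2 = σ ∧ p.1 ∈ U}
  set G3 := {p ∈ rowEdges S | thirdSymbol S p = some σ ∧ p.1 ∈ U ∧ p.2 ∈ U}
  have hU : ∀ {x}, x ∈ U ↔ x ≠ σ ∧ x ∉ T := by simp [U]
  have hG : G1 ∪ G2 ∪ G3 ⊆ {p ∈ rowEdges S | ∀ τ ∈ T, (R p).symm σ < (R p).symm τ} := by
    intro p hp
    simp only [G1, G2, G3, mem_union, mem_filter, hU] at hp
    have hpE : p ∈ rowEdges S := by tauto
    exact mem_filter.mpr ⟨hpE, precedes_of_mem_rowEdges hR hpE hσT (by tauto)⟩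
  have h12 : Disjoint G1 G2 :=
    disjoint_filter.mpr fun p hp h1 h2 => (mem_filter.mp hp).2.1 (h1.trans h2.1.symm)
  have h123 : Disjoint (G1 ∪ G2) G3 := by
    refine disjoint_union_left.mpr ⟨disjoint_filter.mpr fun p _ h1 h3 => ?_,
      disjoint_filter.mpr fun p _ h2 h3 => ?_⟩
    · exact hS.notMem_self _ (h1 ▸ (mem_of_thirdSymbol_eq_some h3.1).1)
    · exact hS.notMem_self _ (h2.1 ▸ (mem_of_thirdSymbol_eq_some h3.1).2)
  have hc1 : #G1 = w - 1 - #(S σ) := card_rowEdges_filter_fst hS σ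
  have hc2 : #{x ∈ U | σ ∉ S x} ≤ #G2 := card_le_card_filter_snd_eq (by simp [U])
  have hc3 : (#{x ∈ U | σ ∈ S x}).choose 2 ≤ #G3 :=
    choose_two_le_card_filter_thirdSymbol_eq hS σ U
  calc _ ≤ #(G1 ∪ G2 ∪ G3) := by
        rw [card_union_of_disjoint h123, card_union_of_disjoint h12]; omega
    _ ≤ _ := card_le_card hG

theorem suitableCoreExists_of_isCoreScheme (hS : IsCoreScheme S) (hN : #(rowEdges S) ≤ N)
    (ht : t + 5 ≤ 2 * w) : SuitableCoreExists N w t := by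
  have hrows : ∀ p, ∃ π : Equiv.Perm (Fin w), p ∈ rowEdges S → StartsWith π (rowPrefix S p) :=
    fun p => if hp : p ∈ rowEdges S then
      (exists_startsWith (rowPrefix_nodup hS hp)).imp fun _ h _ => h
    else ⟨1, fun h => absurd h hp⟩
  choose R hR using hrows
  refine suitableCoreExists_of_finset _ hN R fun σ T hσT _ =>
    le_trans ?_ (card_filter_precedes_ge hS hR hσT)
  have hU : #{x ∈ (insert σ T)ᶜ | σ ∉ S x} + #{x ∈ (insert σ T)ᶜ | σ ∈ S x} = w - 1 - #T := by
    rw [add_comm, card_filter_add_card_filter_not, card_compl, card_insert_of_notMem hσT,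
      Fintype.card_fin]
    omega
  rcases hS.card_le σ with h2 | ⟨h3, hown⟩
  · have := Nat.sub_one_le_choose_two #{x ∈ (insert σ T)ᶜ | σ ∈ S x}
    omega
  · have : #{x ∈ (insert σ T)ᶜ | σ ∈ S x} = 0 := by simp [hown]
    omega

end Rows

lemma _root_.ZMod.natCast_ne_zero_of_lt {l k : ℕ} (hk0 : 0 < k) (hkl : k < l) :
    (k : ZMod l) ≠ 0 := by
  rw [Ne, ZMod.natCast_eq_zero_iff]
  exact Nat.not_dvd_of_pos_of_lt hk0 hkl

lemma card_inter_le_of_not_subset {α : Type*} [DecidableEq α] {A B : Finset α} {k : ℕ}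
    (hA : #A ≤ k + 1) (hAB : ¬ A ⊆ B) : #(A ∩ B) ≤ k := by
  by_contra hk
  exact hAB (inter_eq_left.mp (eq_of_subset_of_card_le inter_subset_left (by omega)))

lemma one_two_three_ne_zero {l : ℕ} (hl : 4 ≤ l) :
    (1 : ZMod l) ≠ 0 ∧ (2 : ZMod l) ≠ 0 ∧ (3 : ZMod l) ≠ 0 :=
  ⟨by simpa using ZMod.natCast_ne_zero_of_lt (l := l) (k := 1) (by omega) (by omega),
    by simpa using ZMod.natCast_ne_zero_of_lt (l := l) (k := 2) (by omega) (by omega),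
    by simpa using ZMod.natCast_ne_zero_of_lt (l := l) (k := 3) (by omega) (by omega)⟩

lemma card_consecutiveTriple {l : ℕ} (hl : 4 ≤ l) (x : ZMod l) : #{x, x + 1, x + 2} = 3 := by
  obtain ⟨h1, h2, -⟩ := one_two_three_ne_zero hl
  exact card_eq_three.mpr ⟨x, x + 1, x + 2, fun h => h1 (by linear_combination h.symm),
    fun h => h2 (by linear_combination h.symm), fun h => h1 (by linear_combination h.symm), rfl⟩

section Triples

variable {l : ℕ} [NeZero l]

def consecutiveTriples : Finset (Finset (ZMod l)) := univ.image fun c => {c, c + 1, c + 2}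

def nonconsecutiveTriples : Finset (Finset (ZMod l)) := univ.powersetCard 3 \ consecutiveTriples

lemma choose_three_sub_le_card_nonconsecutiveTriples :
    l.choose 3 - l ≤ #(nonconsecutiveTriples (l := l)) := by
  have h3 : #(univ.powersetCard 3 : Finset (Finset (ZMod l))) = l.choose 3 := by
    simp [ZMod.card]
  have hc : #(consecutiveTriples (l := l)) ≤ l := card_image_le.trans (by simp [ZMod.card])
  have := le_card_sdiff consecutiveTriples (univ.powersetCard 3 : Finset (Finset (ZMod l)))
  rw [nonconsecutiveTriples]
  omega

end Triples

section Cyclic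

variable {l m : ℕ}

def cyclicScheme (τ : Fin m → Finset (ZMod l)) : ZMod l ⊕ Fin m → Finset (ZMod l ⊕ Fin m)
  | .inl z => {.inl (z + 1), .inl (z + 2)}
  | .inr j => (τ j).map .inl

variable {τ : Fin m → Finset (ZMod l)}

lemma cyclicScheme_card_inter_inl_inl (hl : 4 ≤ l) {x y : ZMod l} (hxy : x ≠ y) :
    #(cyclicScheme τ (.inl x) ∩ cyclicScheme τ (.inl y)) ≤
      (if .inl y ∈ cyclicScheme τ (.inl x) then 0 else 1) +
        (if .inl x ∈ cyclicScheme τ (.inl y) then 0 else 1) := by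
  obtain ⟨h1, h2, h3⟩ := one_two_three_ne_zero hl
  by_cases hboth : .inl y ∈ cyclicScheme τ (.inl x) ∧ .inl x ∈ cyclicScheme τ (.inl y)
  · rw [if_pos hboth.1, if_pos hboth.2, Nat.le_zero, card_eq_zero, eq_empty_iff_forall_notMem]
    simp only [cyclicScheme, mem_inter, mem_insert, mem_singleton, Sum.inl.injEq] at hboth ⊢
    grind
  · have : ¬ cyclicScheme τ (.inl x) ⊆ cyclicScheme τ (.inl y) := by
      simp only [cyclicScheme, insert_subset_iff, mem_insert, mem_singleton, Sum.inl.injEq,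
        singleton_subset_iff]
      grind
    have hI : #(cyclicScheme τ (.inl x) ∩ cyclicScheme τ (.inl y)) ≤ 1 :=
      card_inter_le_of_not_subset card_le_two this
    rcases not_and_or.mp hboth with h | h <;> rw [if_neg h] <;> split_ifs <;> omega

lemma cyclicScheme_card_inter_inl_inr [NeZero l] (hl : 4 ≤ l)
    (hτ : ∀ j, τ j ∈ nonconsecutiveTriples) (x : ZMod l) (j : Fin m) :
    #(cyclicScheme τ (.inl x) ∩ cyclicScheme τ (.inr j)) ≤
      (if .inr j ∈ cyclicScheme τ (.inl x) then 0 else 1) +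
        (if .inl x ∈ cyclicScheme τ (.inr j) then 0 else 1) := by
  have hj : Sum.inr j ∉ cyclicScheme τ (.inl x) := by simp [cyclicScheme]
  rw [if_neg hj]
  split_ifs with hx
  · have hxj : x ∈ τ j := by simpa [cyclicScheme] using hx
    refine card_inter_le_of_not_subset card_le_two fun hsub => ?_
    have hsub' : {x, x + 1, x + 2} ⊆ τ j := by
      simpa [cyclicScheme, insert_subset_iff, hxj] using hsub
    have hτj := mem_sdiff.mp (hτ j)
    refine hτj.2 (mem_image.mpr ⟨x, mem_univ _, eq_of_subset_of_card_le hsub' ?_⟩)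
    rw [(mem_powersetCard.mp hτj.1).2]
    exact (card_consecutiveTriple hl x).ge
  · exact (card_le_card inter_subset_left).trans card_le_two

lemma cyclicScheme_card_inter_inr_inr [NeZero l] (hτ : ∀ j, τ j ∈ nonconsecutiveTriples)
    (hinj : Function.Injective τ) {i j : Fin m} (hij : i ≠ j) :
    #(cyclicScheme τ (.inr i) ∩ cyclicScheme τ (.inr j)) ≤
      (if .inr j ∈ cyclicScheme τ (.inr i) then 0 else 1) +
        (if .inr i ∈ cyclicScheme τ (.inr j) then 0 else 1) := by
  have hcard : ∀ k, #(τ k) = 3 := fun k => (mem_powersetCard.mp (mem_sdiff.mp (hτ k)).1).2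
  have hnotMem : ∀ i j, Sum.inr j ∉ cyclicScheme τ (.inr i) := by simp [cyclicScheme]
  rw [if_neg (hnotMem i j), if_neg (hnotMem j i)]
  simp only [cyclicScheme, ← map_inter, card_map]
  refine card_inter_le_of_not_subset (hcard i).le fun hsub => hij (hinj ?_)
  exact eq_of_subset_of_card_le hsub (by rw [hcard, hcard])

lemma card_cyclicScheme_inl (hl : 4 ≤ l) (x : ZMod l) : #(cyclicScheme τ (.inl x)) = 2 := by
  obtain ⟨h1, -, -⟩ := one_two_three_ne_zero hl
  exact card_pair (by simpa using fun h => h1 (by linear_combination h.symm))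

lemma card_cyclicScheme_inr [NeZero l] (hτ : ∀ j, τ j ∈ nonconsecutiveTriples) (j : Fin m) :
    #(cyclicScheme τ (.inr j)) = 3 := by
  simpa [cyclicScheme] using (mem_powersetCard.mp (mem_sdiff.mp (hτ j)).1).2

theorem isCoreScheme_cyclicScheme [NeZero l] (hl : 4 ≤ l)
    (hτ : ∀ j, τ j ∈ nonconsecutiveTriples) (hinj : Function.Injective τ) :
    IsCoreScheme (cyclicScheme τ) where
  notMem_self
    | .inl x => by
      obtain ⟨h1, h2, -⟩ := one_two_three_ne_zero hl
      simp only [cyclicScheme, mem_insert, mem_singleton, Sum.inl.injEq, not_or]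
      exact ⟨fun h => h1 (by linear_combination h.symm), fun h => h2 (by linear_combination h.symm)⟩
    | .inr j => by simp [cyclicScheme]
  card_inter_le
    | .inl x, .inl y, h => cyclicScheme_card_inter_inl_inl hl (by simpa using h)
    | .inl x, .inr j, _ => cyclicScheme_card_inter_inl_inr hl hτ x j
    | .inr j, .inl x, _ => by
      rw [inter_comm, add_comm]
      exact cyclicScheme_card_inter_inl_inr hl hτ x j
    | .inr i, .inr j, h => cyclicScheme_card_inter_inr_inr hτ hinj (by simpa using h)
  card_le
    | .inl x => .inl card_le_two
    | .inr j => .inr ⟨(card_cyclicScheme_inr hτ j).le, fun y => by cases y <;> simp [cyclicScheme]⟩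

lemma card_rowEdges_cyclicScheme [NeZero l] {w : ℕ} (hl : 4 ≤ l)
    (hτ : ∀ j, τ j ∈ nonconsecutiveTriples) (hinj : Function.Injective τ)
    (e : ZMod l ⊕ Fin m ≃ Fin w) :
    #(rowEdges fun y => (cyclicScheme τ (e.symm y)).map e.toEmbedding) =
      l * (w - 3) + m * (w - 4) := by
  rw [card_rowEdges ((isCoreScheme_cyclicScheme hl hτ hinj).map e)]
  simp only [card_map]
  rw [e.symm.sum_comp (fun b => w - 1 - #(cyclicScheme τ b)), Fintype.sum_sum_type]
  simp [card_cyclicScheme_inl hl, card_cyclicScheme_inr hτ, ZMod.card, Nat.sub_sub]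

lemma exists_injective_nonconsecutiveTriples [NeZero l] (hm : m + l ≤ l.choose 3) :
    ∃ τ : Fin m → Finset (ZMod l), (∀ j, τ j ∈ nonconsecutiveTriples) ∧ Function.Injective τ := by
  obtain ⟨τ⟩ : Nonempty (Fin m ↪ nonconsecutiveTriples (l := l)) := by
    refine Function.Embedding.nonempty_of_card_le ?_
    have := choose_three_sub_le_card_nonconsecutiveTriples (l := l)
    simp only [Fintype.card_fin, Fintype.card_coe]
    omega
  exact ⟨fun j => τ j, fun j => (τ j).2, Subtype.val_injective.comp τ.injective⟩

theorem suitableCoreExists_of_add_le_choose_three {N t : ℕ} (hl : 4 ≤ l) (hm : m + l ≤ l.choose 3)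
    (hN : l * (l + m - 3) + m * (l + m - 4) ≤ N) (ht : t + 5 ≤ 2 * (l + m)) :
    SuitableCoreExists N (l + m) t := by
  have : NeZero l := ⟨by omega⟩
  obtain ⟨τ, hτ, hinj⟩ := exists_injective_nonconsecutiveTriples hm
  let e : ZMod l ⊕ Fin m ≃ Fin (l + m) := Fintype.equivFinOfCardEq (by simp [ZMod.card])
  refine suitableCoreExists_of_isCoreScheme ((isCoreScheme_cyclicScheme hl hτ hinj).map e) ?_ ht
  rwa [card_rowEdges_cyclicScheme hl hτ hinj e]

end Cyclic

end SuitableCore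

theorem stmt8_general (s l : ℕ) (h1 : s + 3 ≤ Nat.choose l 3) (h2 : l ≤ s + 3) :
    SuitableCoreExists ((s + 3) * (s - 1) + l) (s + 3) (2 * s + 1) := by
  have hl : 4 ≤ l := by
    by_contra! h
    have := Nat.choose_le_choose 3 (Nat.le_of_lt_succ h)
    rw [Nat.choose_self] at this
    omega
  obtain ⟨m, hm⟩ := Nat.exists_eq_add_of_le h2
  obtain ⟨k, rfl⟩ : ∃ k, s = k + 1 := ⟨s - 1, by omega⟩
  rw [hm]
  refine SuitableCore.suitableCoreExists_of_add_le_choose_three hl (by omega) (le_of_eq ?_)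
    (by omega)
  rw [show l + m - 3 = k + 1 by omega, show l + m - 4 = k by omega, Nat.add_sub_cancel]
  ring

/-- For all `s ≥ 1`, an `((s+3)(s−1)+l, s+3, 2s+1)`-suitable core exists provided
`C(l,3) ≥ s+3 ≥ l`. -/
theorem stmt8 (s l : ℕ) (hs : 1 ≤ s) (hl : 0 < l)
    (h1 : s + 3 ≤ Nat.choose l 3) (h2 : l ≤ s + 3) :
    SuitableCoreExists ((s + 3) * (s - 1) + l) (s + 3) (2 * s + 1) :=
  stmt8_general s l h1 h2
end

section
/- Let s be a positive integer and let l be a positive integer such that there exist integers k₁, k₂, k₃ ≥ 3 with k₁+k₂+k₃ = l, and suppose there exists an edge-coloring of the complete graph on s vertices with colors {1,2,3} such that for each h ∈ {1,2,3} there is no clique of k_h+1 vertices all of whose edges receive color h (i.e., s < R(k₁+1, k₂+1, k₃+1)). Then there exists an (N, s+3, 2s+1)-suitable core with N = (s+3)(s−1) + l. -/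
open Finset Function

section Leads

variable {α : Type*} {m : ℕ}

def Leads (f : Fin m → α) (σ : α) (T : Finset α) : Prop :=
  ∃ i, f i = σ ∧ ∀ j < i, f j ∉ T

instance [DecidableEq α] (f : Fin m → α) (σ : α) (T : Finset α) : Decidable (Leads f σ T) :=
  by unfold Leads; infer_instance

variable {T : Finset α} {a b c : α}

lemma leads_vec_zero : Leads ![a, b, c] a T :=
  ⟨0, rfl, fun j hj => absurd hj (Fin.not_lt_zero j)⟩

lemma leads_vec_one (ha : a ∉ T) : Leads ![a, b, c] b T :=
  ⟨1, rfl, fun j hj => by fin_cases j <;> simp_all⟩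

lemma leads_vec_two (ha : a ∉ T) (hb : b ∉ T) : Leads ![a, b, c] c T :=
  ⟨2, rfl, fun j hj => by fin_cases j <;> simp_all⟩

lemma injective_vec_three (hab : a ≠ b) (hac : a ≠ c) (hbc : b ≠ c) :
    Injective ![a, b, c] := by
  intro i j h
  fin_cases i <;> fin_cases j <;> simp_all [eq_comm]

end Leads

lemma Equiv.Perm.lt_apply_of_apply_eq_castLE {w m : ℕ} (hmw : m ≤ w) {π : Equiv.Perm (Fin w)}
    {f : Fin m → Fin w} (hπ : ∀ i, π (f i) = Fin.castLE hmw i) {i : Fin m} {τ : Fin w}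
    (hτ : ∀ j ≤ i, f j ≠ τ) : π (f i) < π τ := by
  rw [hπ]
  by_contra! hle
  have hm : (π τ : ℕ) < m := lt_of_le_of_lt hle i.isLt
  refine hτ ⟨π τ, hm⟩ hle (π.injective ?_)
  rw [hπ]
  rfl

theorem suitableCoreExists_of_leads {ι α : Type*} [Fintype ι] [DecidableEq α] {m N w t : ℕ}
    (hN : Fintype.card ι = N) (e : α ≃ Fin w) (hmw : m ≤ w) (lead : ι → Fin m → α)
    (hlead : ∀ r, Injective (lead r))
    (h : ∀ σ (T : Finset α), σ ∉ T → #T < t → t - #T ≤ #{r | Leads (lead r) σ T}) :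
    SuitableCoreExists N w t := by
  classical
  choose π hπ using fun r => Equiv.Perm.exists_extending_pair (e ∘ lead r) (Fin.castLE hmw)
    (e.injective.comp (hlead r)) (Fin.castLE_injective hmw)
  let eN := Fintype.equivFinOfCardEq hN
  refine ⟨fun j => (π (eN.symm j)).symm, fun σ T hσT hT => ?_⟩
  simp only [Equiv.symm_symm]
  have hσ : e.symm σ ∉ T.map e.symm.toEmbedding := by simpa using hσT
  refine (card_map _ ▸ h _ _ hσ (by simpa using hT)).trans
    (card_le_card_of_injOn eN (fun r hr => ?_) eN.injective.injOn)
  obtain ⟨i, hi, hbefore⟩ := (mem_filter.mp hr).2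
  refine mem_filter.mpr ⟨mem_univ _, fun τ hτ => ?_⟩
  rw [Equiv.symm_apply_apply, ← e.apply_symm_apply σ, ← hi]
  refine Equiv.Perm.lt_apply_of_apply_eq_castLE hmw (hπ r) fun j hj hjτ => ?_
  have hjτ' : lead r j = e.symm τ := by simp [← hjτ]
  rcases hj.lt_or_eq with hj | rfl
  · exact hbefore j hj (by simpa [hjτ'] using hτ)
  · exact hσT (e.symm.injective (hi.symm.trans hjτ') ▸ hτ)

theorem card_le_card_filter_sym2_add {α : Type*} [DecidableEq α] (P : Sym2 α → Prop)
    [DecidablePred P] (K : ℕ)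
    (hP : ¬ ∃ W : Finset α, #W = K + 1 ∧ ∀ a ∈ W, ∀ b ∈ W, a ≠ b → P s(a, b))
    (A : Finset α) : #A ≤ #{e ∈ A.sym2 | ¬ e.IsDiag ∧ ¬ P e} + K := by
  induction A using Finset.strongInduction with
  | H A ih =>
    by_cases hA : #A ≤ K
    · omega
    obtain ⟨W, hWA, hW⟩ := exists_subset_card_eq (show K + 1 ≤ #A by omega)
    obtain ⟨a, ha, b, hb, hab, hPab⟩ : ∃ a ∈ W, ∃ b ∈ W, a ≠ b ∧ ¬ P s(a, b) := by
      by_contra! hcon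
      exact hP ⟨W, hW, hcon⟩
    have hsub : {e ∈ (A.erase a).sym2 | ¬ e.IsDiag ∧ ¬ P e} ⊂
        {e ∈ A.sym2 | ¬ e.IsDiag ∧ ¬ P e} := by
      refine ssubset_iff_of_subset (filter_subset_filter _ (sym2_mono (erase_subset a A)))
        |>.mpr ⟨s(a, b), ?_, ?_⟩
      · simp [hWA ha, hWA hb, hab, hPab]
      · simp
    have hih := ih _ (erase_ssubset (hWA ha))
    have hlt := card_lt_card hsub
    rw [card_erase_of_mem (hWA ha)] at hih
    omega

lemma add_ite_eq_or_add_ite_eq {α : Type*} [LinearOrder α] {u v : α} (huv : u ≠ v)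
    {c H : Fin 3} (hcH : c ≠ H) :
    c + (if u < v then 1 else 2) = H ∨ c + (if v < u then 1 else 2) = H := by
  rcases huv.lt_or_gt with h | h <;> simp only [h, h.not_gt, if_true, if_false] <;>
    revert c H <;> decide

namespace RamseyCore

variable (s : ℕ) (k : Fin 3 → ℕ)

abbrev Symbol : Type := Fin s ⊕ Fin 3

abbrev Row : Type :=
  ((v : Fin s) × {x : Symbol s // x ≠ .inl v}) ⊕ ((h : Fin 3) × Fin (k h - 1))

def colourShift (c : ℕ) : Fin 3 := if c = 1 then 2 else 1

def lead (χ : Sym2 (Fin s) → Fin 3) : Row s k → Fin 3 → Symbol s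
  | .inl ⟨v, .inl u, _⟩ => ![.inl u, .inl v, .inr (χ s(u, v) + if u < v then 1 else 2)]
  | .inl ⟨v, .inr g, _⟩ => ![.inr g, .inl v, .inr (g + 1)]
  | .inr ⟨h, c⟩ => ![.inr h, .inr (h + colourShift c), .inr (h - colourShift c)]

variable {s k} {χ : Sym2 (Fin s) → Fin 3}

lemma card_row (hs : 0 < s) (hk : ∀ h, 1 ≤ k h) :
    Fintype.card (Row s k) = (s + 3) * (s - 1) + (k 0 + k 1 + k 2) := by
  simp only [Fintype.card_sum, Fintype.card_sigma, Fintype.card_subtype_compl, Fintype.card_fin,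
    Fintype.card_unique, Nat.add_one_sub_one, sum_const, card_univ, smul_eq_mul,
    Fin.sum_univ_three]
  obtain ⟨n, rfl⟩ : ∃ n, s = n + 1 := ⟨s - 1, by omega⟩
  have := hk 0; have := hk 1; have := hk 2
  simp only [Nat.add_sub_cancel]
  ring_nf
  omega

lemma injective_lead (r : Row s k) : Injective (lead s k χ r) := by
  rcases r with ⟨v, ⟨u | g, hx⟩⟩ | ⟨h, c⟩
  · exact injective_vec_three hx (by simp) (by simp)
  · exact injective_vec_three (by simp) (by simp) (by simp)
  · have key : ∀ h d : Fin 3, d ≠ 0 → h ≠ h + d ∧ h ≠ h - d ∧ h + d ≠ h - d := by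
      decide
    obtain ⟨h1, h2, h3⟩ :=
      key h (colourShift c) (by unfold colourShift; split_ifs <;> decide)
    exact injective_vec_three (by simpa using h1) (by simpa using h2) (by simpa using h3)

theorem le_card_leads_inl (v : Fin s) (T : Finset (Symbol s)) :
    2 * s + 1 ≤ #{r | Leads (lead s k χ r) (.inl v) T} + #T := by
  let φ : Row s k → Fin s ⊕ Symbol s
    | .inl ⟨w, x, _⟩ => if x = .inl v then .inl w else .inr x
    | .inr _ => .inl v
  have hsurj : Set.SurjOn φ ↑({r | Leads (lead s k χ r) (.inl v) T} : Finset (Row s k))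
      ↑((univ.erase v).disjSum ((univ.erase (.inl v)) \ T)) := by
    rintro (u | x) hux
    · have hu : u ≠ v := by simpa using hux
      exact ⟨.inl ⟨u, .inl v, by simpa using hu.symm⟩,
        mem_filter.mpr ⟨mem_univ _, leads_vec_zero⟩, by simp [φ]⟩
    · obtain ⟨hx, hxT⟩ : x ≠ .inl v ∧ x ∉ T := by simpa [and_comm] using hux
      refine ⟨.inl ⟨v, x, hx⟩, mem_filter.mpr ⟨mem_univ _, ?_⟩, by simp [φ, hx]⟩
      rcases x with u | g <;> exact leads_vec_one hxT
  have hφ := card_le_card_of_surjOn φ hsurj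
  have hT := card_le_card_sdiff_add_card (s := univ.erase (.inl v : Symbol s)) (t := T)
  simp only [card_disjSum, card_erase_of_mem (mem_univ _), card_univ, Fintype.card_fin,
    Fintype.card_sum] at hφ hT
  have := v.pos
  omega

lemma exists_colourShift_eq (h H : Fin 3) (hne : h ≠ H) : ∃ c < 2, h + colourShift c = H := by
  refine ⟨if h + 1 = H then 0 else 1, by split_ifs <;> omega, ?_⟩
  unfold colourShift
  revert h H
  decide

def colourWitness (H : Fin 3) :
    Row s k → Fin s ⊕ ((h : Fin 3) × Fin (k h - 1)) ⊕ Fin 3 ⊕ Sym2 (Fin s)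
  | .inl ⟨v, .inr _, _⟩ => .inl v
  | .inl ⟨v, .inl u, _⟩ => .inr (.inr (.inr s(u, v)))
  | .inr p => if p.1 = H then .inr (.inl p) else .inr (.inr (.inl p.1))

lemma surjOn_colourWitness (hk : ∀ h, 3 ≤ k h) (H : Fin 3) (T : Finset (Symbol s)) :
    Set.SurjOn (colourWitness (s := s) (k := k) H)
      ↑({r | Leads (lead s k χ r) (.inr H) T} : Finset (Row s k))
      ↑((univ : Finset (Fin s)).disjSum
        ((({H} : Finset (Fin 3)).sigma fun h => (univ : Finset (Fin (k h - 1)))).disjSum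
          (((univ.erase H) \ T.toRight).disjSum
            {e ∈ (univ \ T.toLeft).sym2 | ¬ e.IsDiag ∧ ¬ χ e = H}))) := by
  rintro (v | ⟨h, c⟩ | h | e) hmem
  · exact ⟨.inl ⟨v, .inr H, Sum.inr_ne_inl⟩,
      mem_filter.mpr ⟨mem_univ _, leads_vec_zero⟩, rfl⟩
  · obtain rfl : h = H := by simpa using hmem
    exact ⟨.inr ⟨h, c⟩, mem_filter.mpr ⟨mem_univ _, leads_vec_zero⟩,
      by simp [colourWitness]⟩
  · obtain ⟨hhH, hhT⟩ : h ≠ H ∧ .inr h ∉ T := by simpa using hmem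
    obtain ⟨c, hc2, hc⟩ := exists_colourShift_eq h H hhH
    refine ⟨.inr ⟨h, ⟨c, by have := hk h; omega⟩⟩, mem_filter.mpr ⟨mem_univ _, ?_⟩,
      by simp [colourWitness, hhH]⟩
    show Leads ![_, .inr (h + colourShift c), _] _ T
    rw [hc]
    exact leads_vec_one hhT
  · induction e using Sym2.ind with
    | h u v =>
    obtain ⟨⟨huT, hvT⟩, huv, hχuv⟩ :
        (.inl u ∉ T ∧ .inl v ∉ T) ∧ u ≠ v ∧ χ s(u, v) ≠ H := by
      simpa using hmem
    rcases add_ite_eq_or_add_ite_eq huv hχuv with h | h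
    · refine ⟨.inl ⟨v, .inl u, by simpa using huv⟩,
        mem_filter.mpr ⟨mem_univ _, ?_⟩, rfl⟩
      show Leads ![_, _, .inr (χ s(u, v) + if u < v then 1 else 2)] _ T
      rw [h]
      exact leads_vec_two huT hvT
    · refine ⟨.inl ⟨u, .inl v, by simpa using huv.symm⟩,
        mem_filter.mpr ⟨mem_univ _, ?_⟩, by simp [colourWitness, Sym2.eq_swap]⟩
      show Leads ![_, _, .inr (χ s(v, u) + if v < u then 1 else 2)] _ T
      rw [Sym2.eq_swap, h]
      exact leads_vec_two hvT huT

theorem le_card_leads_inr (hk : ∀ h, 3 ≤ k h)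
    (hχ : ∀ h : Fin 3, ¬ ∃ W : Finset (Fin s), #W = k h + 1 ∧
        ∀ a ∈ W, ∀ b ∈ W, a ≠ b → χ s(a, b) = h) (H : Fin 3) (T : Finset (Symbol s)) :
    2 * s + 1 ≤ #{r | Leads (lead s k χ r) (.inr H) T} + #T := by
  have hwitness := card_le_card_of_surjOn _ (surjOn_colourWitness (χ := χ) hk H T)
  have hcolours := card_le_card_sdiff_add_card (s := univ.erase H) (t := T.toRight)
  have hvertices := card_le_card_sdiff_add_card (s := univ) (t := T.toLeft)
  have hedges := card_le_card_filter_sym2_add (fun e => χ e = H) (k H) (hχ H) (univ \ T.toLeft)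
  have hT := card_toLeft_add_card_toRight (u := T)
  have := hk H
  simp only [card_disjSum, card_sigma, sum_singleton, card_univ, Fintype.card_fin,
    card_erase_of_mem (mem_univ _)] at hwitness hcolours hvertices
  omega

end RamseyCore

theorem stmt11_general (s l : ℕ) (hs : 0 < s)
    (k : Fin 3 → ℕ) (hk : ∀ h, 3 ≤ k h) (hsum : k 0 + k 1 + k 2 = l)
    (χ : Sym2 (Fin s) → Fin 3)
    (hχ : ∀ h : Fin 3, ¬ ∃ W : Finset (Fin s), W.card = k h + 1 ∧
        ∀ a ∈ W, ∀ b ∈ W, a ≠ b → χ s(a, b) = h) :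
    SuitableCoreExists ((s + 3) * (s - 1) + l) (s + 3) (2 * s + 1) := by
  subst hsum
  refine suitableCoreExists_of_leads (RamseyCore.card_row hs fun h => by have := hk h; omega)
    finSumFinEquiv (by omega) (RamseyCore.lead s k χ) RamseyCore.injective_lead
    fun σ T _ _ => ?_
  rcases σ with v | H
  · have := RamseyCore.le_card_leads_inl (k := k) (χ := χ) v T
    omega
  · have := RamseyCore.le_card_leads_inr hk hχ H T
    omega

/-- If `k₁,k₂,k₃ ≥ 3`, `k₁+k₂+k₃ = l`, and there is a 3-coloring of the edges of `K_s`
with no monochromatic clique of `k_h+1` vertices in color `h` (i.e. `s < R(k₁+1,k₂+1,k₃+1)`),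
then an `((s+3)(s−1)+l, s+3, 2s+1)`-suitable core exists. -/
theorem stmt11 (s l : ℕ) (hs : 0 < s) (hl : 0 < l)
    (k : Fin 3 → ℕ) (hk : ∀ h, 3 ≤ k h) (hsum : k 0 + k 1 + k 2 = l)
    (χ : Sym2 (Fin s) → Fin 3)
    (hχ : ∀ h : Fin 3, ¬ ∃ W : Finset (Fin s), W.card = k h + 1 ∧
        ∀ a ∈ W, ∀ b ∈ W, a ≠ b → χ s(a, b) = h) :
    SuitableCoreExists ((s + 3) * (s - 1) + l) (s + 3) (2 * s + 1) :=
  stmt11_general s l hs k hk hsum χ hχ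
end

section
/- Let e and m be positive integers and let d ≥ (e−1)(2m+1)+1. Let A be a finite set of size d and let g be a function from A to subsets of A each of size at most m. Then there exists a subset B of A of size e such that for all distinct i, j ∈ B, j ∉ g(i). -/
private lemma aux12 {X : Type*} [DecidableEq X] (m : ℕ) :
    ∀ (e : ℕ) (A : Finset X) (g : X → Finset X),
      (e - 1) * (2 * m + 1) + 1 ≤ A.card →
      (∀ a ∈ A, (A.filter (· ∈ g a)).card ≤ m) →
      ∃ B ⊆ A, B.card = e ∧ ∀ i ∈ B, ∀ j ∈ B, i ≠ j → j ∉ g i := by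
  intro e
  induction e with
  | zero => intro A g _ _; exact ⟨∅, Finset.empty_subset _, rfl, by simp⟩
  | succ f ih =>
    intro A g hcard hout
    have hApos : 0 < A.card := by omega
    -- find a low in-degree element
    have hsum : ∑ a ∈ A, (A.filter (fun x => a ∈ g x)).card ≤ m * A.card := by
      calc ∑ a ∈ A, (A.filter (fun x => a ∈ g x)).card
          = ∑ a ∈ A, ∑ x ∈ A, (if a ∈ g x then 1 else 0) := by
            exact Finset.sum_congr rfl fun a _ => Finset.card_filter _ _
        _ = ∑ x ∈ A, ∑ a ∈ A, (if a ∈ g x then 1 else 0) := Finset.sum_comm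
        _ = ∑ x ∈ A, (A.filter (· ∈ g x)).card := by
            exact Finset.sum_congr rfl fun x _ => (Finset.card_filter _ _).symm
        _ ≤ ∑ _x ∈ A, m := Finset.sum_le_sum hout
        _ = m * A.card := by rw [Finset.sum_const, smul_eq_mul, mul_comm]
    have ha : ∃ a ∈ A, (A.filter (fun x => a ∈ g x)).card ≤ m := by
      by_contra h
      push_neg at h
      have : m * A.card + A.card ≤ ∑ a ∈ A, (A.filter (fun x => a ∈ g x)).card := by
        calc m * A.card + A.card = ∑ _a ∈ A, (m + 1) := by
              rw [Finset.sum_const, smul_eq_mul]; ring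
          _ ≤ _ := Finset.sum_le_sum fun a haA => h a haA
      omega
    obtain ⟨a, haA, hain⟩ := ha
    rcases Nat.eq_zero_or_pos f with hf | hf
    · subst hf
      refine ⟨{a}, Finset.singleton_subset_iff.mpr haA, rfl, ?_⟩
      intro i hi j hj hij
      simp only [Finset.mem_singleton] at hi hj
      exact absurd (hi.trans hj.symm) hij
    set R : Finset X := insert a ((A.filter (· ∈ g a)) ∪ (A.filter (fun x => a ∈ g x))) with hR
    have hRcard : R.card ≤ 2 * m + 1 := by
      calc R.card ≤ ((A.filter (· ∈ g a)) ∪ (A.filter (fun x => a ∈ g x))).card + 1 :=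
            Finset.card_insert_le _ _
        _ ≤ ((A.filter (· ∈ g a)).card + (A.filter (fun x => a ∈ g x)).card) + 1 :=
            Nat.add_le_add_right (Finset.card_union_le _ _) 1
        _ ≤ 2 * m + 1 := by
            have := hout a haA
            omega
    set A' : Finset X := A \ R with hA'
    have hA'sub : A' ⊆ A := Finset.sdiff_subset
    have hA'card : A.card - (2 * m + 1) ≤ A'.card := by
      have h2 : A' = A \ (A ∩ R) := by rw [Finset.sdiff_inter_self_left]
      have h3 : A'.card = A.card - (A ∩ R).card := by
        rw [h2, Finset.card_sdiff_of_subset Finset.inter_subset_left]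
      have h4 : (A ∩ R).card ≤ R.card := Finset.card_le_card Finset.inter_subset_right
      omega
    have hout' : ∀ b ∈ A', (A'.filter (· ∈ g b)).card ≤ m := fun b hb =>
      le_trans (Finset.card_le_card (Finset.filter_subset_filter _ hA'sub)) (hout b (hA'sub hb))
    have hcard' : (f - 1) * (2 * m + 1) + 1 ≤ A'.card := by
      simp only [Nat.add_sub_cancel] at hcard
      have hf1 : 1 ≤ f := hf
      obtain ⟨k, rfl⟩ := Nat.exists_eq_add_of_le hf1
      have h1 : (1 + k) * (2 * m + 1) = k * (2 * m + 1) + (2 * m + 1) := by ring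
      have h2 : ((1 + k) - 1) * (2 * m + 1) = k * (2 * m + 1) := by congr 1; omega
      omega
    obtain ⟨B', hB'sub, hB'card, hB'good⟩ := ih A' g hcard' hout'
    have haR : a ∈ R := Finset.mem_insert_self _ _
    have haA' : a ∉ A' := fun h => (Finset.mem_sdiff.mp h).2 haR
    refine ⟨insert a B', ?_, ?_, ?_⟩
    · intro x hx
      rcases Finset.mem_insert.mp hx with rfl | hx
      · exact haA
      · exact hA'sub (hB'sub hx)
    · rw [Finset.card_insert_of_notMem (fun h => haA' (hB'sub h)), hB'card]
    · intro i hi j hj hij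
      rcases Finset.mem_insert.mp hi with rfl | hi'
      · -- i = a, j ∈ B' : j ∉ g a
        rcases Finset.mem_insert.mp hj with rfl | hj'
        · exact absurd rfl hij
        · have hjA' : j ∈ A' := hB'sub hj'
          have := (Finset.mem_sdiff.mp hjA').2
          intro hjg
          exact this (Finset.mem_insert_of_mem (Finset.mem_union_left _
            (Finset.mem_filter.mpr ⟨hA'sub hjA', hjg⟩)))
      · rcases Finset.mem_insert.mp hj with rfl | hj'
        · -- j = a, i ∈ B' : a ∉ g i
          have hiA' : i ∈ A' := hB'sub hi'
          have := (Finset.mem_sdiff.mp hiA').2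
          intro hjg
          exact this (Finset.mem_insert_of_mem (Finset.mem_union_right _
            (Finset.mem_filter.mpr ⟨hA'sub hiA', hjg⟩)))
        · exact hB'good i hi' j hj' hij

/-- Let `e, m` be positive integers and `d ≥ (e−1)(2m+1)+1`. If `A` is a finite set of
size `d` and `g` maps each element of `A` to a subset of `A` of size at most `m`, then
there is a subset `B ⊆ A` of size `e` with `j ∉ g i` for all distinct `i, j ∈ B`. -/
theorem stmt12 {X : Type*} [DecidableEq X] (e m d : ℕ) (he : 0 < e) (hm : 0 < m)
    (hd : (e - 1) * (2 * m + 1) + 1 ≤ d)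
    (A : Finset X) (hA : A.card = d)
    (g : X → Finset X) (hgA : ∀ a ∈ A, g a ⊆ A) (hg : ∀ a ∈ A, (g a).card ≤ m) :
    ∃ B ⊆ A, B.card = e ∧ ∀ i ∈ B, ∀ j ∈ B, i ≠ j → j ∉ g i := by
  apply aux12 m e A g (hA ▸ hd)
  intro a ha
  exact le_trans (Finset.card_le_card fun x hx => (Finset.mem_filter.mp hx).2) (hg a ha)
end

section
/- There exists s₀ such that for all integers s ≥ s₀ and every natural number l with l ≤ (ln s)/(6 ln 3), there is no (N, s+3, 2s+1)-suitable core with N = (s+3)(s−1) + l. -/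
/-!
Suitability forces every symbol to lead (stand first in) at least `s - 1` rows, so with
`(s + 3)(s - 1) + l` rows all but at most `l` symbols are *tight*, leading exactly `s - 1` rows.
Say `σ` blocks `x` if no row starts with `x` followed by `σ`. Blockers are never tight, and every
tight symbol has at least three of them, so some triple `T₀` of non-tight symbols blocks a set `Y`
of at least `6 (s + 3 - l) / l³` tight symbols. For `σ ∈ T₀`, suitability shows that every
`(surplus σ + 1)`-subset of `Y` contains the first two symbols of a row in which only symbols of
`Y` precede `σ`. A three-colour Ramsey argument upgrades this to: every `3^(l+3)`-subset of `Y`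
contains a pair doing this for all three `σ ∈ T₀` at once, and supersaturation yields about
`|Y|² / 9^(l+3)` such pairs. Each of them starts three distinct rows, one more than the rows
already forced by the tight symbols, and for `s ≥ 3^(6l)` the rows run out.
-/

open Finset

theorem forall_pair_insert {α β : Type*} [DecidableEq α] {χ : Finset α → β} {K : Finset α}
    {v : α} {b : β} (hv : ∀ u ∈ K, χ {v, u} = b) (hK : ∀ u ∈ K, ∀ w ∈ K, u ≠ w → χ {u, w} = b) :
    ∀ u ∈ insert v K, ∀ w ∈ insert v K, u ≠ w → χ {u, w} = b := by
  intro u hu w hw huw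
  rcases mem_insert.mp hu with rfl | huK <;> rcases mem_insert.mp hw with rfl | hwK
  · exact absurd rfl huw
  · exact hv w hwK
  · rw [pair_comm]; exact hv u huK
  · exact hK u huK w hwK huw

theorem exists_monochromatic_of_card_pow_sum_le {α ι : Type*} [DecidableEq α] [Fintype ι]
    [DecidableEq ι] (hι : 1 < Fintype.card ι) (χ : Finset α → ι) (a : ι → ℕ) (Y : Finset α)
    (hY : Fintype.card ι ^ ∑ i, a i ≤ #Y) :
    ∃ i, ∃ K ⊆ Y, #K = a i ∧ ∀ u ∈ K, ∀ v ∈ K, u ≠ v → χ {u, v} = i := by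
  set k := Fintype.card ι
  induction hn : ∑ i, a i generalizing a Y with
  | zero =>
    have : Nonempty ι := Fintype.card_pos_iff.mp (by omega)
    obtain ⟨i⟩ := this
    exact ⟨i, ∅, empty_subset _, by simp [(sum_eq_zero_iff.mp hn) i (mem_univ i)], by simp⟩
  | succ n ih =>
    by_cases h0 : ∃ i, a i = 0
    · obtain ⟨i, hi⟩ := h0
      exact ⟨i, ∅, empty_subset _, by simp [hi], by simp⟩
    push Not at h0
    rw [hn] at hY
    obtain ⟨v, hv⟩ : Y.Nonempty := card_pos.mp (lt_of_lt_of_le (by positivity) hY)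
    have hfiber : k * (k ^ n - 1) < #(Y.erase v) := by
      rw [card_erase_of_mem hv, Nat.mul_sub, ← pow_succ']
      have := Nat.one_le_pow n k (by omega)
      have := Nat.le_self_pow (n := n + 1) (by omega) k
      omega
    obtain ⟨i, -, hi⟩ := exists_lt_card_fiber_of_mul_lt_card_of_maps_to
      (f := fun u => χ {v, u}) (fun u _ => mem_univ _) (by rwa [card_univ])
    set Z := {u ∈ Y.erase v | χ {v, u} = i}
    have hZY : Z ⊆ Y := (filter_subset _ _).trans (erase_subset _ _)
    have hsum : ∑ j, Function.update a i (a i - 1) j = n := by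
      have := add_sum_erase univ a (mem_univ i)
      rw [sum_update_of_mem (mem_univ i), sdiff_singleton_eq_erase]
      have := h0 i
      omega
    obtain ⟨j, K, hKZ, hK, hmono⟩ := ih _ Z (by rw [hsum]; omega) hsum
    by_cases hji : j = i
    · subst hji
      have hvK : v ∉ K := fun h => by simpa [Z] using hKZ h
      refine ⟨j, insert v K, insert_subset hv (hKZ.trans hZY), ?_, ?_⟩
      · rw [card_insert_of_notMem hvK, hK, Function.update_self]
        have := h0 j
        omega
      · exact forall_pair_insert (fun u hu => (mem_filter.mp (hKZ hu)).2) hmono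
    · exact ⟨j, K, hKZ.trans hZY, by simpa [hji] using hK, hmono⟩

theorem exists_pair_forall_of_card_pow_sum_le {α ι : Type*} [DecidableEq α] [Fintype ι]
    (hι : 1 < Fintype.card ι) (H : ι → Finset α → Prop) (a : ι → ℕ) (S : Finset α)
    (hH : ∀ i, ∀ A ⊆ S, #A = a i → ∃ u ∈ A, ∃ v ∈ A, u ≠ v ∧ H i {u, v})
    (hS : Fintype.card ι ^ ∑ i, a i ≤ #S) :
    ∃ u ∈ S, ∃ v ∈ S, u ≠ v ∧ ∀ i, H i {u, v} := by
  classical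
  have : Nonempty ι := Fintype.card_pos_iff.mp (by omega)
  by_contra! hmiss
  obtain ⟨i, K, hKS, hK, hmono⟩ := exists_monochromatic_of_card_pow_sum_le hι
    (fun e => Classical.epsilon fun i => ¬ H i e) a S hS
  obtain ⟨u, hu, v, hv, huv, hH⟩ := hH i K hKS hK
  obtain ⟨j, hj⟩ := hmiss u (hKS hu) v (hKS hv) huv
  exact Classical.epsilon_spec (p := fun i => ¬ H i {u, v}) ⟨j, hj⟩ (hmono u hu v hv huv ▸ hH)

theorem choose_two_le_card_mul_choose_two {α : Type*} [DecidableEq α] {Y : Finset α}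
    {Q : Finset (Finset α)} {R : ℕ} (hQ : Q ⊆ Y.powersetCard 2) (hR : 2 ≤ R) (hRY : R ≤ #Y)
    (hcover : ∀ S ⊆ Y, #S = R → ∃ q ∈ Q, q ⊆ S) :
    (#Y).choose 2 ≤ #Q * R.choose 2 := by
  have hcount : #(Y.powersetCard R) * 1 ≤ #Q * (#Y - 2).choose (R - 2) := by
    refine card_mul_le_card_mul (fun S q => q ⊆ S) (fun S hS => ?_) (fun q hq => ?_)
    · obtain ⟨q, hq, hqS⟩ := hcover S (mem_powersetCard.mp hS).1 (mem_powersetCard.mp hS).2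
      exact one_le_card.mpr ⟨q, mem_filter.mpr ⟨hq, hqS⟩⟩
    · obtain ⟨hqY, hq2⟩ := mem_powersetCard.mp (hQ hq)
      rw [bipartiteBelow, card_filter_powersetCard_subset q Y R hqY (by omega), hq2]
  have hpos : 0 < (#Y - 2).choose (R - 2) := Nat.choose_pos (by omega)
  rw [card_powersetCard, mul_one] at hcount
  have := Nat.choose_mul (n := #Y) (hR)
  refine Nat.le_of_mul_le_mul_right (c := (#Y - 2).choose (R - 2)) ?_ hpos
  calc (#Y).choose 2 * (#Y - 2).choose (R - 2) = (#Y).choose R * R.choose 2 := this.symm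
    _ ≤ #Q * (#Y - 2).choose (R - 2) * R.choose 2 := Nat.mul_le_mul_right _ hcount
    _ = #Q * R.choose 2 * (#Y - 2).choose (R - 2) := by ring

theorem exists_card_le_mul_card_fiber {α β : Type*} [DecidableEq β] {s : Finset α}
    {t : Finset β} {f : α → β} (hf : ∀ a ∈ s, f a ∈ t) (hs : s.Nonempty) :
    ∃ y ∈ t, #s ≤ #t * #{x ∈ s | f x = y} := by
  obtain ⟨y, hy, hmax⟩ := t.exists_max_image (fun y => #{x ∈ s | f x = y})
    (hs.image f |>.mono (image_subset_iff.mpr hf))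
  refine ⟨y, hy, ?_⟩
  calc #s = ∑ z ∈ t, #{x ∈ s | f x = z} := card_eq_sum_card_fiberwise hf
    _ ≤ ∑ _z ∈ t, #{x ∈ s | f x = y} := sum_le_sum hmax
    _ = #t * #{x ∈ s | f x = y} := by rw [sum_const, smul_eq_mul]

theorem card_add_card_le_card_of_fibers {ι γ δ : Type*} [Fintype ι] [DecidableEq δ]
    (f : ι → γ) (π : γ → δ) {P : Finset γ} {E : Finset δ}
    (hP : ∀ p ∈ P, ∃ i, f i = p) (hPE : ∀ d ∈ E, #{p ∈ P | π p = d} ≤ 2)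
    (hE : ∀ d ∈ E, 3 ≤ #{i | π (f i) = d}) :
    #P + #E ≤ Fintype.card ι := by
  classical
  set D := P.image π ∪ E
  have hfiber : ∀ d ∈ D, #{p ∈ P | π p = d} + (if d ∈ E then 1 else 0) ≤ #{i | π (f i) = d} := by
    intro d _
    split_ifs with hd
    · linarith [hPE d hd, hE d hd]
    · simp only [add_zero]
      refine card_le_card_of_surjOn f ?_
      intro p hp
      obtain ⟨hpP, hpd⟩ := mem_filter.mp hp
      obtain ⟨i, rfl⟩ := hP p hpP
      exact ⟨i, by simpa using hpd, rfl⟩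
  calc #P + #E = ∑ d ∈ D, (#{p ∈ P | π p = d} + if d ∈ E then 1 else 0) := by
        rw [sum_add_distrib, ← card_eq_sum_card_fiberwise (fun p hp => mem_union_left _
          (mem_image_of_mem π hp)), sum_boole, filter_mem_eq_inter,
          inter_eq_right.mpr subset_union_right, Nat.cast_id]
    _ ≤ ∑ d ∈ D, #{i | π (f i) = d} := sum_le_sum hfiber
    _ ≤ Fintype.card ι := by
        rw [← card_univ, ← card_biUnion]
        · exact card_le_univ _
        · intro d _ d' _ hdd'
          exact disjoint_filter.mpr fun i _ h h' => hdd' (h.symm.trans h')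

theorem two_mul_choose_two (n : ℕ) : 2 * n.choose 2 = n * (n - 1) := by
  rw [Nat.choose_two_right, Nat.mul_div_cancel' (Nat.even_mul_pred_self n).two_dvd]

theorem mul_self_le_of_choose_two_le {y c R : ℕ} (hy : 2 ≤ y)
    (h : y.choose 2 ≤ c * R.choose 2) : y * y ≤ 2 * c * (R * R) := by
  have hy' : y * y ≤ 2 * (y * (y - 1)) := by
    obtain ⟨y', rfl⟩ : ∃ y', y = y' + 2 := ⟨y - 2, by omega⟩
    rw [show y' + 2 - 1 = y' + 1 by omega]
    nlinarith
  have hR : R * (R - 1) ≤ R * R := Nat.mul_le_mul_left _ (Nat.sub_le _ _)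
  have := two_mul_choose_two y
  have := two_mul_choose_two R
  nlinarith

theorem mul_pow_six_mul_sub_three_lt_pow (l : ℕ) : 324 * (l ^ 6 * (l - 3)) < 81 ^ l := by
  rcases Nat.lt_or_ge l 4 with hl | hl
  · rw [show l - 3 = 0 by omega]; positivity
  have h7 : 324 * l ^ 7 < 81 ^ l := by
    induction l, hl using Nat.le_induction with
    | base => norm_num
    | succ n hn ih =>
      have : (4 * (n + 1)) ^ 7 ≤ (5 * n) ^ 7 := Nat.pow_le_pow_left (by omega) 7
      rw [mul_pow, mul_pow] at this
      calc 324 * (n + 1) ^ 7 ≤ 81 * (324 * n ^ 7) := by norm_num at this; omega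
        _ < 81 * 81 ^ n := by omega
        _ = 81 ^ (n + 1) := by ring
  calc 324 * (l ^ 6 * (l - 3)) ≤ 324 * (l ^ 6 * l) := by gcongr; omega
    _ = 324 * l ^ 7 := by ring
    _ < 81 ^ l := h7

theorem add_three_mul_le_of_card_bound {s l h τ c : ℕ} (hτ : τ + h = s + 3) (hhl : h ≤ l)
    (hs : 1 ≤ s) (hcount : τ * (s + 2) + c ≤ (s + 3) * (s - 1) + l) :
    c + 3 * (s + 3) ≤ l * (s + 3) := by
  obtain ⟨s', rfl⟩ : ∃ s', s = s' + 1 := ⟨s - 1, by omega⟩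
  have := Nat.mul_le_mul_right (s' + 3) hhl
  simp only [Nat.add_sub_cancel] at hcount
  nlinarith

theorem pow_three_lt_three_pow (l : ℕ) : l ^ 3 < 3 ^ (3 * l) := by
  rw [pow_mul']
  exact Nat.pow_lt_pow_left (Nat.lt_pow_self (by norm_num)) (by norm_num)

theorem three_pow_le_of_mul_le {s l y A : ℕ} (hl : 1 ≤ l) (hs : 3 ^ (6 * l) ≤ s)
    (hsy : 3 * s ≤ l ^ 3 * y) (hA : A ≤ l + 3) : 3 ^ A ≤ y := by
  have hA' : l ^ 3 * 3 ^ A ≤ l ^ 3 * 3 ^ (l + 3) :=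
    Nat.mul_le_mul_left _ (Nat.pow_le_pow_right (by norm_num) hA)
  have h3 : 3 ^ (3 * l) * 3 ^ (l + 3) ≤ 3 * 3 ^ (6 * l) := by
    rw [← pow_add, ← pow_succ']
    exact Nat.pow_le_pow_right (by norm_num) (by omega)
  have hcube : l ^ 3 * 3 ^ (l + 3) ≤ 3 ^ (3 * l) * 3 ^ (l + 3) :=
    Nat.mul_le_mul_right _ (pow_three_lt_three_pow l).le
  exact Nat.le_of_mul_le_mul_left (hA'.trans (hcube.trans (h3.trans (by omega))))
    (pow_pos (by omega) 3)

theorem false_of_le_mul_nine_pow {s l : ℕ} (hs : 3 ^ (6 * l) ≤ s)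
    (h : 9 * s ≤ 2916 * (l ^ 6 * (l - 3)) * 9 ^ l) : False := by
  have hs' : 81 ^ l * 9 ^ l ≤ s := by
    rwa [← mul_pow, show (81 * 9 : ℕ) = 3 ^ 6 by norm_num, ← pow_mul]
  have h9 : 9 * (81 ^ l * 9 ^ l) ≤ 9 * (324 * (l ^ 6 * (l - 3)) * 9 ^ l) :=
    calc _ ≤ 9 * s := by omega
      _ ≤ _ := h.trans_eq (by ring)
  have := Nat.le_of_mul_le_mul_right (Nat.le_of_mul_le_mul_left h9 (by norm_num)) (by positivity)
  have := mul_pow_six_mul_sub_three_lt_pow l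
  omega

theorem false_of_card_bounds {s l h τ y c A : ℕ} (hτ : τ + h = s + 3) (hhl : h ≤ l)
    (hy : 6 * τ ≤ h ^ 3 * y) (hA : A ≤ l + 3)
    (hsup : 3 ^ A ≤ y → y.choose 2 ≤ c * (3 ^ A).choose 2)
    (hcount : τ * (s + 2) + c ≤ (s + 3) * (s - 1) + l) (hs : 3 ^ (6 * l) ≤ s) : False := by
  have hs1 : 1 ≤ s := le_trans (Nat.one_le_pow _ _ (by norm_num)) hs
  have hc := add_three_mul_le_of_card_bound hτ hhl hs1 hcount
  have hl3 : 3 ≤ l := by nlinarith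
  have hls : 2 * l ≤ s := by
    have := Nat.pow_le_pow_right (show 0 < 3 by norm_num) (show l + 1 ≤ 6 * l by omega)
    rw [pow_succ] at this
    have : l < 3 ^ l := Nat.lt_pow_self (by norm_num)
    omega
  have hsy : 3 * s ≤ l ^ 3 * y := by
    have : h ^ 3 ≤ l ^ 3 := Nat.pow_le_pow_left hhl 3
    nlinarith
  have hy2 : 2 ≤ y := by
    have : l ^ 3 < s :=
      (pow_three_lt_three_pow l).trans_le ((Nat.pow_le_pow_right (by norm_num) (by omega)).trans hs)
    nlinarith
  have hRy := three_pow_le_of_mul_le (by omega) hs hsy hA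
  have hR2 : 3 ^ A * 3 ^ A ≤ 729 * 9 ^ l := by
    rw [← pow_add, show 729 * 9 ^ l = 3 ^ (2 * l + 6) by rw [pow_add, pow_mul]; norm_num; ring]
    exact Nat.pow_le_pow_right (by norm_num) (by omega)
  have hc' : c ≤ (l - 3) * (2 * s) := by
    have : (l - 3) * (s + 3) ≤ (l - 3) * (2 * s) := Nat.mul_le_mul_left _ (by omega)
    have : c + 3 * (s + 3) ≤ (l - 3) * (s + 3) + 3 * (s + 3) := by
      rw [← add_mul, Nat.sub_add_cancel hl3]; exact hc
    omega
  refine false_of_le_mul_nine_pow hs (Nat.le_of_mul_le_mul_right (c := s) ?_ (by omega))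
  calc 9 * s * s = (3 * s) * (3 * s) := by ring
    _ ≤ (l ^ 3 * y) * (l ^ 3 * y) := Nat.mul_le_mul hsy hsy
    _ = l ^ 6 * (y * y) := by ring
    _ ≤ l ^ 6 * (2 * ((l - 3) * (2 * s)) * (729 * 9 ^ l)) := by
        refine Nat.mul_le_mul_left _ ((mul_self_le_of_choose_two_le hy2 (hsup hRy)).trans ?_)
        gcongr
    _ = 2916 * (l ^ 6 * (l - 3)) * 9 ^ l * s := by ring

theorem pow_mul_le_of_le_log_div {b k s l : ℕ} (hb : 1 < b) (hk : 0 < k) (hs : 1 ≤ s)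
    (hl : (l : ℝ) ≤ Real.log s / (k * Real.log b)) : b ^ (k * l) ≤ s := by
  have hlogb : 0 < Real.log b := Real.log_pos (by exact_mod_cast hb)
  rw [le_div_iff₀ (by positivity)] at hl
  have hlog : Real.log ((b : ℝ) ^ (k * l)) ≤ Real.log s := by
    rw [Real.log_pow]; push_cast; linarith
  exact_mod_cast (Real.log_le_log_iff (by positivity) (by exact_mod_cast hs)).mp hlog

section Before

variable {N w : ℕ} (C : Fin N → Equiv.Perm (Fin w))

def before (ρ : Fin N) (σ : Fin w) : Finset (Fin w) :=
  {τ | (C ρ).symm τ < (C ρ).symm σ}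

variable {C}

theorem mem_before {ρ : Fin N} {σ τ : Fin w} :
    τ ∈ before C ρ σ ↔ (C ρ).symm τ < (C ρ).symm σ := by
  simp [before]

theorem card_before (ρ : Fin N) (σ : Fin w) : #(before C ρ σ) = (C ρ).symm σ := by
  have : before C ρ σ = (Iio ((C ρ).symm σ)).map (C ρ).toEmbedding := by
    ext τ
    simp [mem_before]
  rw [this, card_map, Fin.card_Iio]

theorem eq_of_before_subset {ρ : Fin N} {σ σ' : Fin w} {Y : Finset (Fin w)} (hσ : σ ∉ Y)
    (hσ' : σ' ∉ Y) (h : before C ρ σ ⊆ Y) (h' : before C ρ σ' ⊆ Y) : σ = σ' := by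
  by_contra hne
  rcases lt_or_gt_of_ne ((C ρ).symm.injective.ne hne) with hlt | hlt
  · exact hσ (h' (mem_before.mpr hlt))
  · exact hσ' (h (mem_before.mpr hlt))

theorem IsSuitableCore.le_card_before_subset {t : ℕ} (hC : IsSuitableCore N w t C) {σ : Fin w}
    {A : Finset (Fin w)} (hσA : σ ∉ A) : t + 1 + #A - w ≤ #{ρ | before C ρ σ ⊆ A} := by
  -- `σ` precedes all of `T` exactly when everything before `σ` lies in `A`
  set T := (insert σ A)ᶜ
  have hT : #T + (#A + 1) = w := by
    have := card_le_univ (insert σ A)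
    rw [card_compl, card_insert_of_notMem hσA, Fintype.card_fin] at *
    omega
  by_cases hTt : #T < t
  swap
  · omega
  refine le_trans (by omega) ((hC σ T (by simp [T]) hTt).trans (card_le_card fun ρ => ?_))
  simp only [mem_filter, mem_univ, true_and]
  intro hρ τ hτ
  by_contra hτA
  have hτσ : τ ≠ σ := fun h => (lt_irrefl _) (h ▸ mem_before.mp hτ)
  exact (lt_asymm (mem_before.mp hτ)) (hρ τ (by simp [T, hτσ, hτA]))

end Before

section FirstTwo

variable {N n : ℕ} {C : Fin N → Equiv.Perm (Fin (n + 2))} {ρ : Fin N} {σ x : Fin (n + 2)}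

theorem before_eq_empty_iff : before C ρ σ = ∅ ↔ C ρ 0 = σ := by
  rw [← card_eq_zero, card_before, Fin.val_eq_zero_iff, Equiv.symm_apply_eq, eq_comm]

theorem before_eq_singleton_iff : before C ρ σ = {x} ↔ C ρ 0 = x ∧ C ρ 1 = σ := by
  simp only [← Equiv.eq_symm_apply, Fin.ext_iff, Fin.val_zero, Fin.val_one]
  constructor
  · intro h
    have hx := mem_before.mp (h ▸ mem_singleton_self x)
    have hσ := card_before (C := C) ρ σ
    rw [h, card_singleton] at hσ
    rw [Fin.lt_def] at hx
    omega
  · rintro ⟨hx, hσ⟩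
    ext τ
    rw [mem_before, mem_singleton, Fin.lt_def, ← hσ, Nat.lt_one_iff, ← (C ρ).symm.injective.eq_iff,
      Fin.ext_iff, ← hx]

theorem pair_subset_before (h0 : C ρ 0 ≠ σ) (h1 : C ρ 1 ≠ σ) :
    {C ρ 0, C ρ 1} ⊆ before C ρ σ := by
  rw [Ne, ← Equiv.eq_symm_apply, Fin.ext_iff, Fin.val_zero] at h0
  rw [Ne, ← Equiv.eq_symm_apply, Fin.ext_iff, Fin.val_one] at h1
  intro τ hτ
  rw [mem_before, Fin.lt_def]
  rcases mem_insert.mp hτ with rfl | hτ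
  · rw [Equiv.symm_apply_apply, Fin.val_zero]; omega
  · rw [mem_singleton.mp hτ, Equiv.symm_apply_apply, Fin.val_one]; omega

end FirstTwo

section Core

variable {s N : ℕ} (C : Fin N → Equiv.Perm (Fin (s + 3)))

def rowsLedBy (σ : Fin (s + 3)) : Finset (Fin N) := {ρ | C ρ 0 = σ}

/-- The excess of `#(rowsLedBy C σ)` over the minimum `s - 1` forced by suitability. -/
def surplus (σ : Fin (s + 3)) : ℕ := #(rowsLedBy C σ) + 1 - s

def tight : Finset (Fin (s + 3)) := {x | surplus C x = 0}

def Blocks (σ x : Fin (s + 3)) : Prop := x ≠ σ ∧ ∀ ρ, ¬(C ρ 0 = x ∧ C ρ 1 = σ)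

instance (σ x : Fin (s + 3)) : Decidable (Blocks C σ x) := by
  unfold Blocks
  infer_instance

def sharedPairs (T₀ Y : Finset (Fin (s + 3))) : Finset (Finset (Fin (s + 3))) :=
  {e ∈ Y.powersetCard 2 | ∀ σ ∈ T₀, ∃ ρ, {C ρ 0, C ρ 1} = e ∧ before C ρ σ ⊆ Y}

variable {C}

theorem card_compl_tight_le_sum_surplus : #(tight C)ᶜ ≤ ∑ σ, surplus C σ := by
  rw [card_eq_sum_ones]
  refine (sum_le_sum fun σ hσ => ?_).trans (sum_le_sum_of_subset (subset_univ _))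
  simpa [tight, Nat.one_le_iff_ne_zero] using hσ

namespace IsSuitableCore

variable (hC : IsSuitableCore N (s + 3) (2 * s + 1) C)
include hC

theorem add_card_le_succ_card_before_subset {σ : Fin (s + 3)} {A : Finset (Fin (s + 3))}
    (hσA : σ ∉ A) : s + #A ≤ #{ρ | before C ρ σ ⊆ A} + 1 := by
  have := hC.le_card_before_subset hσA
  omega

theorem card_rowsLedBy_add_one (σ : Fin (s + 3)) : #(rowsLedBy C σ) + 1 = s + surplus C σ := by
  have := hC.add_card_le_succ_card_before_subset (notMem_empty σ)
  simp only [subset_empty, before_eq_empty_iff, card_empty, add_zero] at this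
  unfold surplus rowsLedBy
  omega

theorem sum_surplus_add : ∑ σ, surplus C σ + (s + 3) * s = N + (s + 3) := by
  have hsum : ∑ σ, #(rowsLedBy C σ) = N := by
    unfold rowsLedBy
    rw [← card_eq_sum_card_fiberwise (f := fun ρ => C ρ 0) (fun _ _ => mem_univ _), card_univ,
      Fintype.card_fin]
  calc ∑ σ, surplus C σ + (s + 3) * s = ∑ σ, (s + surplus C σ) := by
        rw [sum_add_distrib]; simp [add_comm, mul_comm]
    _ = ∑ σ, (#(rowsLedBy C σ) + 1) := by simp only [hC.card_rowsLedBy_add_one]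
    _ = N + (s + 3) := by rw [sum_add_distrib, hsum]; simp

theorem surplus_ne_zero_of_blocks {σ x : Fin (s + 3)} (h : Blocks C σ x) : surplus C σ ≠ 0 := by
  have hx := hC.add_card_le_succ_card_before_subset (σ := σ) (A := {x}) (by simpa using h.1.symm)
  have hsub : ({ρ | before C ρ σ ⊆ {x}} : Finset (Fin N)) ⊆ rowsLedBy C σ := by
    intro ρ
    simp only [rowsLedBy, mem_filter, mem_univ, true_and, subset_singleton_iff,
      before_eq_empty_iff, before_eq_singleton_iff]
    rintro (h0 | h01)
    · exact h0
    · exact absurd h01 (h.2 ρ)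
  have := card_le_card hsub
  have := hC.card_rowsLedBy_add_one σ
  rw [card_singleton] at hx
  omega

theorem three_le_card_blocks {x : Fin (s + 3)} (hx : surplus C x = 0) :
    3 ≤ #{σ | Blocks C σ x} := by
  have hsub : univ.erase x ⊆ ({σ | Blocks C σ x} : Finset _) ∪ (rowsLedBy C x).image (C · 1) := by
    intro σ hσ
    rw [mem_union, mem_filter, mem_image]
    by_cases hb : Blocks C σ x
    · exact Or.inl ⟨mem_univ _, hb⟩
    · simp only [Blocks, not_and, not_forall, not_not] at hb
      obtain ⟨ρ, hρ0, hρ1⟩ := hb (ne_of_mem_erase hσ).symm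
      exact Or.inr ⟨ρ, by simp [rowsLedBy, hρ0], hρ1⟩
  have := (card_le_card hsub).trans
    ((card_union_le _ _).trans (Nat.add_le_add_left card_image_le _))
  rw [card_erase_of_mem (mem_univ x), card_univ, Fintype.card_fin] at this
  have := hC.card_rowsLedBy_add_one x
  omega

theorem exists_pair_subset_of_blocks {σ : Fin (s + 3)} {A : Finset (Fin (s + 3))}
    (hblock : ∀ x ∈ A, Blocks C σ x) (hA : #A = surplus C σ + 1) :
    ∃ ρ, C ρ 0 ∈ A ∧ C ρ 1 ∈ A ∧ before C ρ σ ⊆ A := by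
  -- More rows have only `A`-symbols before `σ` than `σ` leads, and `σ` cannot stand second in
  -- such a row, because its predecessor would be blocked.
  have hσA : σ ∉ A := fun h => (hblock σ h).1 rfl
  obtain ⟨ρ, hρ, hρ0⟩ := exists_mem_notMem_of_card_lt_card (s := rowsLedBy C σ)
    (t := {ρ | before C ρ σ ⊆ A})
    (by have := hC.add_card_le_succ_card_before_subset hσA
        have := hC.card_rowsLedBy_add_one σ
        omega)
  have hρA : before C ρ σ ⊆ A := (mem_filter.mp hρ).2
  have h0 : C ρ 0 ≠ σ := fun h => hρ0 (by simp [rowsLedBy, h])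
  have h1 : C ρ 1 ≠ σ := by
    intro h1
    have hb := hρA ((before_eq_singleton_iff.mpr ⟨rfl, h1⟩) ▸ mem_singleton_self (C ρ 0))
    exact (hblock _ hb).2 ρ ⟨rfl, h1⟩
  have hpair := (pair_subset_before h0 h1).trans hρA
  exact ⟨ρ, hpair (mem_insert_self _ _), hpair (by simp), hρA⟩

theorem exists_blocking_triple (htight : (tight C).Nonempty) :
    ∃ T₀ Y : Finset (Fin (s + 3)), #T₀ = 3 ∧ (∀ x ∈ Y, ∀ σ ∈ T₀, Blocks C σ x) ∧
      6 * #(tight C) ≤ #(tight C)ᶜ ^ 3 * #Y := by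
  have hchoice : ∀ x ∈ tight C, ∃ T ∈ (tight C)ᶜ.powersetCard 3,
      T ⊆ ({σ | Blocks C σ x} : Finset _) := by
    intro x hx
    obtain ⟨T, hT, hT3⟩ :=
      exists_subset_card_eq (hC.three_le_card_blocks (by simpa [tight] using hx))
    refine ⟨T, mem_powersetCard.mpr ⟨fun σ hσ => ?_, hT3⟩, hT⟩
    simpa [tight] using hC.surplus_ne_zero_of_blocks (mem_filter.mp (hT hσ)).2
  choose! F hF hFB using hchoice
  obtain ⟨T₀, hT₀, hY⟩ := exists_card_le_mul_card_fiber hF htight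
  refine ⟨T₀, {x ∈ tight C | F x = T₀}, (mem_powersetCard.mp hT₀).2, fun x hx σ hσ => ?_, ?_⟩
  · obtain ⟨hxt, rfl⟩ := mem_filter.mp hx
    exact (mem_filter.mp (hFB x hxt hσ)).2
  · have h6 : 6 * (#(tight C)ᶜ).choose 3 ≤ #(tight C)ᶜ ^ 3 :=
      (Nat.descFactorial_eq_factorial_mul_choose _ 3).symm.le.trans (Nat.descFactorial_le_pow _ 3)
    rw [card_powersetCard] at hY
    calc 6 * #(tight C) ≤ 6 * ((#(tight C)ᶜ).choose 3 * _) := Nat.mul_le_mul_left 6 hY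
      _ ≤ _ := by rw [← mul_assoc]; exact Nat.mul_le_mul_right _ h6

theorem choose_two_le_card_sharedPairs {T₀ Y : Finset (Fin (s + 3))} (hT₀ : #T₀ = 3)
    (hblock : ∀ x ∈ Y, ∀ σ ∈ T₀, Blocks C σ x)
    (hR : 3 ^ ∑ σ ∈ T₀, (surplus C σ + 1) ≤ #Y) :
    (#Y).choose 2 ≤ #(sharedPairs C T₀ Y) * (3 ^ ∑ σ ∈ T₀, (surplus C σ + 1)).choose 2 := by
  have hsum : ∑ σ ∈ T₀, (surplus C σ + 1) ≠ 0 := by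
    simp [sum_add_distrib, hT₀]
  refine choose_two_le_card_mul_choose_two (filter_subset _ _)
    (Nat.one_lt_pow hsum (by norm_num)) hR fun S hSY hS => ?_
  have hpairs : ∀ σ : T₀, ∀ A ⊆ S, #A = surplus C σ + 1 →
      ∃ u ∈ A, ∃ v ∈ A, u ≠ v ∧ ∃ ρ, {C ρ 0, C ρ 1} = ({u, v} : Finset _) ∧
        before C ρ σ ⊆ Y := by
    intro σ A hAS hA
    obtain ⟨ρ, h0, h1, hρA⟩ :=
      hC.exists_pair_subset_of_blocks (fun x hx => hblock x (hSY (hAS hx)) σ σ.2) hA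
    exact ⟨C ρ 0, h0, C ρ 1, h1, (C ρ).injective.ne zero_ne_one, ρ, rfl,
      hρA.trans (hAS.trans hSY)⟩
  obtain ⟨u, hu, v, hv, huv, hH⟩ := exists_pair_forall_of_card_pow_sum_le (by simp [hT₀])
    (fun (σ : T₀) e => ∃ ρ, ({C ρ 0, C ρ 1} : Finset _) = e ∧ before C ρ σ ⊆ Y) _ S hpairs
    (by rw [Fintype.card_coe, hT₀, sum_coe_sort T₀ (fun σ => surplus C σ + 1), hS])
  refine ⟨{u, v}, mem_filter.mpr ⟨mem_powersetCard.mpr ⟨?_, card_pair huv⟩,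
    fun σ hσ => hH ⟨σ, hσ⟩⟩, ?_⟩
  · exact insert_subset (hSY hu) (singleton_subset_iff.mpr (hSY hv))
  · exact insert_subset hu (singleton_subset_iff.mpr hv)

theorem card_tight_mul_add_card_sharedPairs_le {T₀ Y : Finset (Fin (s + 3))} (hT₀ : #T₀ = 3)
    (hblock : ∀ x ∈ Y, ∀ σ ∈ T₀, Blocks C σ x) :
    #(tight C) * (s + 2) + #(sharedPairs C T₀ Y) ≤ N := by
  -- Count rows by their first two symbols: each `(x, τ)` with `τ` tight starts a row, and a shared
  -- pair starts three distinct rows (one for each `σ ∈ T₀`), one more than its two orders need.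
  have hσY : ∀ σ ∈ T₀, σ ∉ Y := fun σ hσ hσY => (hblock σ hσY σ hσ).1 rfl
  set P : Finset (Fin (s + 3) × Fin (s + 3)) := {p ∈ univ ×ˢ tight C | p.1 ≠ p.2}
  have hP : #P = #(tight C) * (s + 2) := by
    rw [card_filter, sum_product_right]
    refine (sum_congr rfl fun τ _ => ?_).trans (sum_const_nat fun _ _ => rfl)
    rw [sum_boole, Nat.cast_id, filter_ne', card_erase_of_mem (mem_univ _)]
    simp
  have := card_add_card_le_card_of_fibers (fun ρ => (C ρ 0, C ρ 1)) (fun p => {p.1, p.2})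
    (P := P) (E := sharedPairs C T₀ Y) (fun p hp => ?_) (fun d hd => ?_) (fun d hd => ?_)
  · simpa [hP] using this
  · obtain ⟨x, τ⟩ := p
    simp only [P, tight, mem_filter, mem_product, mem_univ, true_and] at hp
    by_contra! h
    exact hC.surplus_ne_zero_of_blocks ⟨hp.2, fun ρ hρ => h ρ (Prod.ext hρ.1 hρ.2)⟩ hp.1
  · obtain ⟨a, b, hab, rfl⟩ := card_eq_two.mp (mem_powersetCard.mp (mem_filter.mp hd).1).2
    refine (card_le_card (t := {(a, b), (b, a)}) fun p hp => ?_).trans card_le_two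
    have := congrArg (fun e : Finset (Fin (s + 3)) => (e : Set (Fin (s + 3))))
      (mem_filter.mp hp).2
    simp only [coe_pair, Set.pair_eq_pair_iff] at this
    rcases this with ⟨h1, h2⟩ | ⟨h1, h2⟩
    · simp [Prod.ext_iff, h1, h2]
    · simp [Prod.ext_iff, h1, h2]
  · obtain ⟨σ₀, hσ₀⟩ := card_pos.mp (by omega : 0 < #T₀)
    have : Nonempty (Fin N) := ⟨((mem_filter.mp hd).2 σ₀ hσ₀).choose⟩
    choose! r hr using (mem_filter.mp hd).2
    refine hT₀.symm.trans_le
      (card_le_card_of_injOn r (fun σ hσ => by simp [(hr σ hσ).1]) fun σ hσ σ' hσ' h => ?_)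
    exact eq_of_before_subset (hσY σ hσ) (hσY σ' hσ') (hr σ hσ).2 (h ▸ (hr σ' hσ').2)

end IsSuitableCore

end Core

theorem not_isSuitableCore_of_pow_le {s l : ℕ} (hs : 3 ^ (6 * l) ≤ s)
    (C : Fin ((s + 3) * (s - 1) + l) → Equiv.Perm (Fin (s + 3))) :
    ¬ IsSuitableCore ((s + 3) * (s - 1) + l) (s + 3) (2 * s + 1) C := by
  intro hC
  have hls : l < s := (Nat.lt_pow_self (by norm_num)).trans_le
    ((Nat.pow_le_pow_right (by norm_num) (by omega)).trans hs)
  have hsum : ∑ σ, surplus C σ = l := by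
    have := hC.sum_surplus_add
    obtain ⟨s', rfl⟩ : ∃ s', s = s' + 1 := ⟨s - 1, by omega⟩
    simp only [Nat.add_sub_cancel] at this
    linarith
  have hloose : #(tight C)ᶜ ≤ l := card_compl_tight_le_sum_surplus.trans_eq hsum
  have htight : (tight C).Nonempty := by
    by_contra h
    rw [not_nonempty_iff_eq_empty] at h
    simp [h] at hloose
    omega
  obtain ⟨T₀, Y, hT₀, hblock, hY⟩ := hC.exists_blocking_triple htight
  have hA : ∑ σ ∈ T₀, (surplus C σ + 1) ≤ l + 3 := by
    rw [sum_add_distrib, sum_const, hT₀, smul_eq_mul, mul_one]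
    exact Nat.add_le_add_right ((sum_le_sum_of_subset (subset_univ _)).trans_eq hsum) 3
  exact false_of_card_bounds ((card_add_card_compl (tight C)).trans (Fintype.card_fin _)) hloose
    hY hA (hC.choose_two_le_card_sharedPairs hT₀ hblock)
    (hC.card_tight_mul_add_card_sharedPairs_le hT₀ hblock) hs

/-- For all sufficiently large `s` and any `l = l(s) ≤ ln s / (6 ln 3)`, there is no
`((s+3)(s−1)+l, s+3, 2s+1)`-suitable core. -/
theorem stmt13 :
    ∃ s₀ : ℕ, ∀ s : ℕ, s₀ ≤ s → ∀ l : ℕ, (l : ℝ) ≤ Real.log s / (6 * Real.log 3) →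
      ¬ SuitableCoreExists ((s + 3) * (s - 1) + l) (s + 3) (2 * s + 1) := by
  refine ⟨1, fun s hs l hl ⟨C, hC⟩ => ?_⟩
  exact not_isSuitableCore_of_pow_le
    (pow_mul_le_of_le_log_div (by norm_num) (by norm_num) hs (by exact_mod_cast hl)) C hC
end

section
/- Let m, k, r be integers with 2 ≤ m < r and k > 1, and suppose (r/m)^((k−1)/2) · (e/r)^(1/k) ≥ 2e, where e is Euler's number. Then for every positive integer n with n < (√m/(√e · r)) · k · (r/m)^(k/2), there exists an (r;m)-coloring of the complete graph on n vertices that contains no monochromatic k-clique in any color i ∈ {1,…,r}. (Equivalently, the extended Ramsey number satisfies R^m(k;r) ≥ (√m/(√e · r)) · k · (r/m)^(k/2).) -/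
/-!
Colour every edge of `K_n` by an `m`-subset of the `r` colours, uniformly and independently.
A fixed `k`-set spans a clique monochromatic in colour `i` with probability `(m/r)^(k choose 2)`,
so the expected number of monochromatic `k`-cliques is `r (n choose k) (m/r)^(k choose 2)`.
Bounding `n choose k ≤ e^(k-1) (n/k)^k` (Stirling) and inserting the bound on `n`, this is less
than `(e/r)^(k/2 - 1) ≤ 1`, so some colouring has no monochromatic `k`-clique.
-/

def HasMonoClique {n r : ℕ} (χ : Sym2 (Fin n) → Finset (Fin r)) (i : Fin r) (k : ℕ) : Prop :=
  ∃ W : Finset (Fin n), W.card = k ∧ ∀ a ∈ W, ∀ b ∈ W, a ≠ b → i ∈ χ s(a, b)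

open Finset Fintype Real
open scoped Nat

lemma Nat.sub_one_choose_sub_one_mul {m : ℕ} (hm : 0 < m) (r : ℕ) :
    (r - 1).choose (m - 1) * r = m * r.choose m := by
  obtain ⟨m, rfl⟩ := Nat.exists_eq_add_one_of_ne_zero hm.ne'
  rcases r with _ | r
  · simp
  · simpa [mul_comm] using Nat.add_one_mul_choose_eq r m

lemma Fintype.card_piFinset_ite {ι β : Type*} [Fintype ι] [DecidableEq ι] (S : Finset ι)
    (B C : Finset β) :
    #(piFinset fun e => if e ∈ S then B else C) = #B ^ #S * #C ^ (card ι - #S) := by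
  rw [card_piFinset]
  simp only [apply_ite Finset.card, prod_ite, prod_const]
  rw [filter_not, filter_mem_eq_inter, univ_inter, card_sdiff_of_subset S.subset_univ, card_univ]

lemma card_filter_mem_powersetCard_univ {α : Type*} [Fintype α] [DecidableEq α] {m : ℕ}
    (hm : 0 < m) (i : α) :
    #{s ∈ univ.powersetCard m | i ∈ s} = (card α - 1).choose (m - 1) := by
  simpa using
    card_filter_powersetCard_subset {i} univ m (subset_univ _) (by rw [card_singleton]; exact hm)

section Colorings

variable {ι α : Type*} [Fintype ι] [DecidableEq ι] [Fintype α]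

variable (ι α) in
def colorings (m : ℕ) : Finset (ι → Finset α) :=
  piFinset fun _ => univ.powersetCard m

def monoColorings [DecidableEq α] (m : ℕ) (S : Finset ι) (i : α) : Finset (ι → Finset α) :=
  piFinset fun e => if e ∈ S then {s ∈ (univ : Finset α).powersetCard m | i ∈ s}
    else univ.powersetCard m

lemma mem_colorings {m : ℕ} {χ : ι → Finset α} : χ ∈ colorings ι α m ↔ ∀ e, #(χ e) = m := by
  simp [colorings]

lemma card_colorings (m : ℕ) : #(colorings ι α m) = (card α).choose m ^ card ι := by
  simp [colorings]

variable [DecidableEq α]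

lemma mem_monoColorings {m : ℕ} {S : Finset ι} {i : α} {χ : ι → Finset α} :
    χ ∈ monoColorings m S i ↔ χ ∈ colorings ι α m ∧ ∀ e ∈ S, i ∈ χ e := by
  have hcoord (e : ι) : χ e ∈ (if e ∈ S then {s ∈ (univ : Finset α).powersetCard m | i ∈ s}
      else univ.powersetCard m) ↔ #(χ e) = m ∧ (e ∈ S → i ∈ χ e) := by
    split_ifs with he <;> simp [he]
  simp only [monoColorings, mem_colorings, mem_piFinset, hcoord, forall_and]

lemma card_monoColorings_mul_pow {m : ℕ} (hm : 0 < m) (S : Finset ι) (i : α) :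
    #(monoColorings m S i) * card α ^ #S = m ^ #S * #(colorings ι α m) := by
  rw [monoColorings, card_piFinset_ite, card_filter_mem_powersetCard_univ hm, card_colorings,
    card_powersetCard, card_univ, mul_right_comm, ← mul_pow, Nat.sub_one_choose_sub_one_mul hm,
    mul_pow, mul_assoc, ← pow_add, Nat.add_sub_cancel' (card_le_univ S)]

end Colorings

section Cliques

variable {n r : ℕ}

def cliqueEdges (W : Finset (Fin n)) : Finset (Sym2 (Fin n)) := W.offDiag.image Sym2.mk.uncurry

lemma card_cliqueEdges (W : Finset (Fin n)) : #(cliqueEdges W) = (#W).choose 2 :=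
  Sym2.card_image_offDiag W

lemma hasMonoClique_iff {χ : Sym2 (Fin n) → Finset (Fin r)} {i : Fin r} {k : ℕ} :
    HasMonoClique χ i k ↔ ∃ W ∈ univ.powersetCard k, ∀ e ∈ cliqueEdges W, i ∈ χ e := by
  simp only [HasMonoClique, cliqueEdges, forall_mem_image, mem_offDiag, Prod.forall,
    Function.uncurry_apply_pair, mem_powersetCard_univ, and_imp]
  exact exists_congr fun W => and_congr_right fun _ =>
    ⟨fun h a b ha hb => h a ha b hb, fun h a ha b hb => h a b ha hb⟩

theorem exists_coloring_forall_not_hasMonoClique {m k : ℕ} (hm : 0 < m) (hmr : m ≤ r)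
    (h : r * n.choose k * m ^ k.choose 2 < r ^ k.choose 2) :
    ∃ χ : Sym2 (Fin n) → Finset (Fin r), (∀ e, #(χ e) = m) ∧ ∀ i, ¬ HasMonoClique χ i k := by
  set bad := univ.biUnion fun i : Fin r =>
    (univ.powersetCard k).biUnion fun W : Finset (Fin n) => monoColorings m (cliqueEdges W) i
  set Ω := colorings (Sym2 (Fin n)) (Fin r) m
  have hbad : #bad * r ^ k.choose 2 ≤ r * n.choose k * m ^ k.choose 2 * #Ω :=
    calc #bad * r ^ k.choose 2
        ≤ (∑ i : Fin r, ∑ W ∈ univ.powersetCard k, #(monoColorings m (cliqueEdges W) i)) *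
            r ^ k.choose 2 := by
          gcongr
          exact card_biUnion_le.trans (sum_le_sum fun i _ => card_biUnion_le)
      _ = ∑ i : Fin r, ∑ W ∈ univ.powersetCard k, m ^ k.choose 2 * #Ω := by
          simp only [sum_mul]
          refine sum_congr rfl fun i _ => sum_congr rfl fun W hW => ?_
          have := card_monoColorings_mul_pow hm (cliqueEdges W) i
          rwa [card_cliqueEdges, mem_powersetCard_univ.1 hW, Fintype.card_fin] at this
      _ = r * n.choose k * m ^ k.choose 2 * #Ω := by simp [mul_assoc]
  have hcolorings : 0 < #Ω := by
    rw [card_colorings]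
    exact pow_pos (Nat.choose_pos (by simpa using hmr)) _
  have hlt : #bad < #Ω := by
    refine Nat.lt_of_mul_lt_mul_right (a := r ^ k.choose 2) ?_
    calc #bad * r ^ k.choose 2 ≤ r * n.choose k * m ^ k.choose 2 * #Ω := hbad
      _ < r ^ k.choose 2 * #Ω := Nat.mul_lt_mul_of_pos_right h hcolorings
      _ = #Ω * r ^ k.choose 2 := mul_comm _ _
  obtain ⟨χ, hχ, hχbad⟩ := exists_mem_notMem_of_card_lt_card hlt
  refine ⟨χ, mem_colorings.1 hχ, fun i hi => hχbad ?_⟩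
  obtain ⟨W, hW, hmono⟩ := hasMonoClique_iff.1 hi
  exact mem_biUnion.2 ⟨i, mem_univ i, mem_biUnion.2 ⟨W, hW, mem_monoColorings.2 ⟨hχ, hmono⟩⟩⟩

end Cliques

lemma pow_le_exp_sub_one_mul_factorial {k : ℕ} (hk : 2 ≤ k) :
    (k : ℝ) ^ k ≤ exp (k - 1) * k ! := by
  have hk' : (2 : ℝ) ≤ k := by exact_mod_cast hk
  have he : exp 1 ≤ √(2 * π * k) := by
    refine Real.le_sqrt_of_sq_le ?_
    nlinarith [exp_one_lt_d9, pi_gt_three, exp_pos 1]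
  calc (k : ℝ) ^ k = exp (k - 1) * (exp 1 * (k / exp 1) ^ k) := by
        rw [div_pow, ← exp_nat_mul, mul_one, ← mul_div_assoc, ← mul_div_assoc, ← mul_assoc,
          ← exp_add, sub_add_cancel, mul_div_cancel_left₀ _ (exp_pos _).ne']
    _ ≤ exp (k - 1) * (√(2 * π * k) * (k / exp 1) ^ k) := by gcongr
    _ ≤ exp (k - 1) * k ! := by gcongr; exact Stirling.le_factorial_stirling k

lemma choose_le_exp_sub_one_mul_div_pow (n : ℕ) {k : ℕ} (hk : 2 ≤ k) :
    (n.choose k : ℝ) ≤ exp (k - 1) * (n / k) ^ k := by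
  have hk' : (0 : ℝ) < k := by positivity
  calc (n.choose k : ℝ) ≤ n ^ k / k ! := Nat.choose_le_pow_div k n
    _ ≤ n ^ k / (k ^ k / exp (k - 1)) := by
        gcongr
        rw [div_le_iff₀ (exp_pos _), mul_comm]
        exact pow_le_exp_sub_one_mul_factorial hk
    _ = exp (k - 1) * (n / k) ^ k := by field_simp; rw [div_pow, mul_div_cancel₀ _ (by positivity)]

theorem mul_choose_mul_pow_lt_pow {m k r n : ℕ} (hm : 0 < m) (hk : 2 ≤ k) (hr : exp 1 ≤ r)
    (hn : 0 < n)
    (hlt : (n : ℝ) < √m / (√(exp 1) * r) * k * ((r : ℝ) / m) ^ ((k : ℝ) / 2)) :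
    r * n.choose k * m ^ k.choose 2 < r ^ k.choose 2 := by
  have hr0 : (0 : ℝ) < r := (exp_pos 1).trans_le hr
  have hm0 : (0 : ℝ) < m := by exact_mod_cast hm
  have hk2 : (2 : ℝ) ≤ k := by exact_mod_cast hk
  have hk0 : (0 : ℝ) < k := by positivity
  have hn0 : (0 : ℝ) < n := by exact_mod_cast hn
  have hlogn : log n < log m / 2 - 1 / 2 - log r + log k + k / 2 * (log r - log m) := by
    have := log_lt_log hn0 hlt
    rw [log_mul (by positivity) (by positivity), log_mul (by positivity) (by positivity),
      log_div (by positivity) (by positivity), log_mul (by positivity) (by positivity),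
      log_sqrt hm0.le, log_sqrt (exp_pos 1).le, log_exp, log_rpow (by positivity),
      log_div (by positivity) (by positivity)] at this
    linarith
  have hlogr : 1 ≤ log r := by simpa using log_le_log (exp_pos 1) hr
  have hreal : (r : ℝ) * (exp (k - 1) * (n / k) ^ k) * m ^ k.choose 2 < r ^ k.choose 2 := by
    rw [← log_lt_log_iff (by positivity) (by positivity), log_mul (by positivity) (by positivity),
      log_mul (by positivity) (by positivity), log_mul (by positivity) (by positivity),
      log_exp, log_pow, log_pow, log_pow, log_div (by positivity) (by positivity),
      Nat.cast_choose_two]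
    -- in logarithms the slack is `(k/2 - 1) (log r - 1) ≥ 0`
    linarith [mul_lt_mul_of_pos_left hlogn hk0, mul_nonneg (by linarith : (0 : ℝ) ≤ k - 2)
      (by linarith : 0 ≤ log r - 1)]
  have hchoose := choose_le_exp_sub_one_mul_div_pow n hk
  exact_mod_cast (by gcongr : (r : ℝ) * n.choose k * m ^ k.choose 2 ≤ _).trans_lt hreal

theorem stmt14_general (m k r : ℕ) (hm : 2 ≤ m) (hmr : m < r) (hk : 1 < k) :
    ∀ n : ℕ, 0 < n →
      (n : ℝ) < Real.sqrt m / (Real.sqrt (Real.exp 1) * r) * k * ((r : ℝ) / m) ^ ((k : ℝ) / 2) →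
      ∃ χ : Sym2 (Fin n) → Finset (Fin r),
        (∀ e, (χ e).card = m) ∧ ∀ i : Fin r, ¬ HasMonoClique χ i k := by
  intro n hn hlt
  have hr : exp 1 ≤ r := by
    have : (3 : ℝ) ≤ r := by exact_mod_cast (by omega : 3 ≤ r)
    linarith [exp_one_lt_d9]
  exact exists_coloring_forall_not_hasMonoClique (by omega) hmr.le
    (mul_choose_mul_pow_lt_pow (by omega) hk hr hn hlt)

/-- Probabilistic lower bound for the extended Ramsey number: if `2 ≤ m < r`, `k > 1` and
`(r/m)^((k−1)/2) (e/r)^(1/k) ≥ 2e`, then for every `n < (√m/(√e·r))·k·(r/m)^(k/2)` there is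
an `(r;m)`-coloring of `K_n` with no monochromatic `k`-clique in any color, i.e.
`R^m(k;r) ≥ (√m/(√e·r))·k·(r/m)^(k/2)`. -/
theorem stmt14 (m k r : ℕ) (hm : 2 ≤ m) (hmr : m < r) (hk : 1 < k)
    (hcond : 2 * Real.exp 1 ≤
      ((r : ℝ) / m) ^ (((k : ℝ) - 1) / 2) * (Real.exp 1 / r) ^ ((1 : ℝ) / k)) :
    ∀ n : ℕ, 0 < n →
      (n : ℝ) < Real.sqrt m / (Real.sqrt (Real.exp 1) * r) * k * ((r : ℝ) / m) ^ ((k : ℝ) / 2) →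
      ∃ χ : Sym2 (Fin n) → Finset (Fin r),
        (∀ e, (χ e).card = m) ∧ ∀ i : Fin r, ¬ HasMonoClique χ i k :=
  stmt14_general m k r hm hmr hk
end

section
/- Let δ ∈ {0,1} and let α ≥ 3 be an integer. Let s be an integer, t = 2s+δ, v = s+α, c = s+δ+2−α (so c = t+2−v) and r = 2α−δ−2 (so r = v−c). Let l be a positive integer such that there exist integers k₁,…,k_r, each at least r, with k₁+⋯+k_r = l, and suppose there exists an (r; r−2)-coloring of the complete graph on c vertices containing no monochromatic clique of k_h+1 vertices in color h for every h ∈ {1,…,r} (i.e., c < R^{r−2}(k₁+1,…,k_r+1)). Then there exists an (N, v, t)-suitable core with N = v(c−1) + l. -/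
open Finset

section Rows

variable {ι α : Type*} [DecidableEq α]

/-- Symbols absent from `l` all have the last rank `l.length`, so none of them precedes another. -/
abbrev Precedes (l : List α) (σ τ : α) : Prop :=
  l.idxOf σ < l.idxOf τ

lemma precedes_append_cons {p q : List α} {σ τ : α} (hσ : σ ∉ p) (hτ : τ ∉ p) (hτσ : τ ≠ σ) :
    Precedes (p ++ σ :: q) σ τ := by
  rw [Precedes, List.idxOf_append_of_notMem hσ, List.idxOf_append_of_notMem hτ,
    List.idxOf_cons_self, List.idxOf_cons_ne _ (Ne.symm hτσ)]
  omega

variable [Fintype ι]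

def precedingRows (row : ι → List α) (σ : α) (T : Finset α) : Finset ι :=
  {i | ∀ τ ∈ T, Precedes (row i) σ τ}

lemma mem_precedingRows {row : ι → List α} {σ : α} {T : Finset α} {i : ι} :
    i ∈ precedingRows row σ T ↔ ∀ τ ∈ T, Precedes (row i) σ τ := by
  simp [precedingRows]

lemma card_le_card_precedingRows {X : Type*} [Fintype X] {row : ι → List α} {σ : α}
    {T : Finset α} (f : X → ι) (hf : Function.Injective f)
    (hprec : ∀ x, ∀ τ ∈ T, Precedes (row (f x)) σ τ) :
    Fintype.card X ≤ #(precedingRows row σ T) :=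
  card_le_card_of_injOn f (fun x _ => mem_precedingRows.2 (hprec x)) hf.injOn

lemma exists_perm_symm_lt_of_lt {n : ℕ} {β : Type*} [LinearOrder β] (f : Fin n → β) :
    ∃ π : Equiv.Perm (Fin n), ∀ x y, f x < f y → π.symm x < π.symm y := by
  refine ⟨Tuple.sort f, fun x y hxy => lt_of_not_ge fun hyx => hxy.not_ge ?_⟩
  simpa using Tuple.monotone_sort f hyx

/-- Each row is prescribed only by a prefix: it is completed to a permutation by sorting the
symbols by their rank in the prefix, and the rows of the core beyond `Fintype.card ι` are
arbitrary. -/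
theorem suitableCoreExists_of_rows {N w t : ℕ} (e : α ≃ Fin w) (row : ι → List α)
    (hN : Fintype.card ι ≤ N)
    (hrow : ∀ σ (T : Finset α), σ ∉ T → #T < t → t - #T ≤ #(precedingRows row σ T)) :
    SuitableCoreExists N w t := by
  obtain ⟨emb⟩ : Nonempty (ι ↪ Fin N) := Function.Embedding.nonempty_of_card_le (by simpa)
  choose π hπ using fun i => exists_perm_symm_lt_of_lt fun x => (row i).idxOf (e.symm x)
  refine ⟨Function.extend emb π 1, fun σ T hσT hT => ?_⟩
  calc t - #T = t - #(T.map e.symm.toEmbedding) := by rw [card_map]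
    _ ≤ #(precedingRows row (e.symm σ) (T.map e.symm.toEmbedding)) :=
        hrow _ _ (by simpa using hσT) (by simpa using hT)
    _ ≤ _ := by
        refine card_le_card_of_injOn emb (fun i hi => ?_) emb.injective.injOn
        rw [mem_coe, mem_precedingRows] at hi
        simp only [coe_filter, Set.mem_ofPred_eq, mem_univ, true_and]
        rw [emb.injective.extend_apply]
        exact fun τ hτ => hπ i σ τ (hi _ (by simpa using hτ))

end Rows

lemma exists_orientation {V β : Type*} [LinearOrder V] [DecidableEq β] (m : Sym2 V → Finset β)
    (hm : ∀ e, #(m e) = 2) :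
    ∃ θ : V → V → β, ∀ a b, a < b → ∀ x ∈ m s(a, b), θ a b = x ∨ θ b a = x := by
  choose f g _ hfg using fun e => card_eq_two.mp (hm e)
  refine ⟨fun a b => if a < b then f s(a, b) else g s(a, b), fun a b hab x hx => ?_⟩
  rw [hfg, mem_insert, mem_singleton] at hx
  simp only [if_pos hab, if_neg hab.not_gt, Sym2.eq_swap (a := b)]
  tauto

/-- Deleting the smaller endpoint of every edge leaves an independent set. -/
lemma exists_subset_card_le_add_card_edges {V : Type*} [LinearOrder V] (R : V → V → Prop)
    [DecidableRel R] (S : Finset V) :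
    ∃ W ⊆ S, (∀ a ∈ W, ∀ b ∈ W, a < b → ¬ R a b) ∧
      #S ≤ #W + #{p ∈ S ×ˢ S | p.1 < p.2 ∧ R p.1 p.2} := by
  set E := {p ∈ S ×ˢ S | p.1 < p.2 ∧ R p.1 p.2}
  refine ⟨S \ E.image Prod.fst, sdiff_subset, fun a ha b hb hab hR => ?_, ?_⟩
  · rw [mem_sdiff] at ha hb
    exact ha.2 (mem_image.2 ⟨(a, b), by simp [E, ha.1, hb.1, hab, hR], rfl⟩)
  · exact card_le_card_sdiff_add_card.trans (by gcongr; exact card_image_le)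

lemma card_le_card_missing_add {n r : ℕ} {χ : Sym2 (Fin n) → Finset (Fin r)} {h : Fin r} {k : ℕ}
    (hmono : ¬ HasMonoClique χ h (k + 1)) (S : Finset (Fin n)) :
    #S ≤ #{p ∈ S ×ˢ S | p.1 < p.2 ∧ h ∉ χ s(p.1, p.2)} + k := by
  obtain ⟨W, -, hW, hcard⟩ := exists_subset_card_le_add_card_edges (fun a b => h ∉ χ s(a, b)) S
  suffices #W ≤ k by omega
  by_contra! hk
  obtain ⟨W', hW', hcard'⟩ := exists_subset_card_eq (s := W) (n := k + 1) hk
  refine hmono ⟨W', hcard', fun a ha b hb hab => ?_⟩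
  rcases hab.lt_or_gt with hab | hab
  · exact not_not.1 (hW a (hW' ha) b (hW' hb) hab)
  · rw [Sym2.eq_swap]
    exact not_not.1 (hW b (hW' hb) a (hW' ha) hab)

section Construction

variable {c r : ℕ} {k : Fin r → ℕ}

abbrev CoreRow (c r : ℕ) (k : Fin r → ℕ) : Type :=
  {p : Fin c × Fin c // p.1 ≠ p.2} ⊕ Σ h : Fin r, {x : Fin c ⊕ Fin r // x ≠ .inr h} ⊕ Fin (k h - r)

def coreRow (θ : Fin c → Fin c → Fin r) : CoreRow c r k → List (Fin c ⊕ Fin r)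
  | .inl p => [.inl p.1.1, .inl p.1.2, .inr (θ p.1.1 p.1.2)]
  | .inr ⟨h, .inl x⟩ => [.inr h, x.1]
  | .inr ⟨h, .inr _⟩ => [.inr h]

lemma card_coreRow_le (hk : ∀ h, r ≤ k h) :
    Fintype.card (CoreRow c r k) ≤ (c + r) * (c - 1) + ∑ h, k h := by
  have hpairs : Fintype.card {p : Fin c × Fin c // p.1 ≠ p.2} = c * (c - 1) := by
    have : ({p | p.1 ≠ p.2} : Finset (Fin c × Fin c)) = univ.offDiag := by ext; simp
    rw [Fintype.card_subtype, this, offDiag_card, card_fin, Nat.mul_sub_one]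
  have hcolour (h : Fin r) :
      Fintype.card ({x : Fin c ⊕ Fin r // x ≠ .inr h} ⊕ Fin (k h - r)) ≤ c - 1 + k h := by
    have := hk h
    simp only [ne_eq, Fintype.card_sum, Fintype.card_subtype_compl, Fintype.card_fin,
      Fintype.card_unique]
    omega
  calc Fintype.card (CoreRow c r k) ≤ c * (c - 1) + ∑ h : Fin r, (c - 1 + k h) := by
        rw [Fintype.card_sum, Fintype.card_sigma, hpairs]
        exact Nat.add_le_add_left (sum_le_sum fun h _ => hcolour h) _
    _ = (c + r) * (c - 1) + ∑ h, k h := by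
        rw [sum_add_distrib, sum_const, card_univ, Fintype.card_fin, smul_eq_mul]
        ring

lemma le_card_precedingRows_inl (θ : Fin c → Fin c → Fin r) (u : Fin c)
    (T : Finset (Fin c ⊕ Fin r)) (hu : .inl u ∉ T) :
    2 * c + r - 2 - #T ≤ #(precedingRows (coreRow (k := k) θ) (.inl u) T) := by
  let f : ↥(univ.erase u) ⊕ ↥(T.toLeftᶜ.erase u) ⊕ ↥T.toRightᶜ → CoreRow c r k
    | .inl w => .inl ⟨(u, w), (ne_of_mem_erase w.2).symm⟩
    | .inr (.inl w) => .inl ⟨(w, u), ne_of_mem_erase w.2⟩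
    | .inr (.inr h) => .inr ⟨h, .inl ⟨.inl u, Sum.inl_ne_inr⟩⟩
  have hf : Function.Injective f := by
    rintro (⟨w, hw⟩ | ⟨w, hw⟩ | ⟨h, hh⟩) (⟨w', hw'⟩ | ⟨w', hw'⟩ | ⟨h', hh'⟩) hww' <;>
      simp only [f, Sum.inl.injEq, Sum.inr.injEq, Subtype.mk.injEq, Prod.mk.injEq,
        reduceCtorEq] at hww' ⊢ <;>
      grind [ne_of_mem_erase]
  have hprec : ∀ x, ∀ τ ∈ T, Precedes (coreRow θ (f x)) (.inl u) τ := by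
    have hτu : ∀ τ ∈ T, τ ≠ .inl u := fun τ hτ h => hu (h ▸ hτ)
    rintro (⟨w, hw⟩ | ⟨w, hw⟩ | ⟨h, hh⟩) τ hτ
    · exact precedes_append_cons (p := []) (by simp) (by simp) (hτu τ hτ)
    · refine precedes_append_cons (p := [.inl w]) (by simpa using (ne_of_mem_erase hw).symm)
        ?_ (hτu τ hτ)
      simp only [mem_erase, mem_compl, mem_toLeft] at hw
      rw [List.mem_singleton]
      rintro rfl
      exact hw.2 hτ
    · refine precedes_append_cons (p := [.inr h]) (by simp) ?_ (hτu τ hτ)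
      simp only [mem_compl, mem_toRight] at hh
      rw [List.mem_singleton]
      rintro rfl
      exact hh hτ
  have hsplit := card_toLeft_add_card_toRight (u := T)
  have huT : u ∈ T.toLeftᶜ := by simpa using hu
  have hTL : #T.toLeft < c := by simpa using card_lt_univ_of_notMem (mem_compl.1 huT)
  refine le_trans ?_ (card_le_card_precedingRows f hf hprec)
  simp only [Fintype.card_sum, Fintype.card_coe, card_erase_of_mem (mem_univ u),
    card_erase_of_mem huT, card_compl, card_univ, Fintype.card_fin]
  omega

/-- The orientation of the edge `p` whose row has `h` in third place, when `h` is one of the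
colours `θ` puts on the two orientations. -/
def orientTo (θ : Fin c → Fin c → Fin r) (h : Fin r) (p : Fin c × Fin c) (hp : p.1 < p.2) :
    {q : Fin c × Fin c // q.1 ≠ q.2} :=
  if θ p.1 p.2 = h then ⟨p, hp.ne⟩ else ⟨p.swap, hp.ne'⟩

lemma orientTo_inj {θ : Fin c → Fin c → Fin r} {h : Fin r} {p p' : Fin c × Fin c}
    {hp : p.1 < p.2} {hp' : p'.1 < p'.2} (he : orientTo θ h p hp = orientTo θ h p' hp') :
    p = p' := by
  unfold orientTo at he
  split_ifs at he <;>
    simp only [Subtype.mk.injEq, Prod.ext_iff, Prod.fst_swap, Prod.snd_swap] at he <;>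
    exact Prod.ext (by omega) (by omega)

lemma precedes_coreRow_orientTo {θ : Fin c → Fin c → Fin r} {h : Fin r} {p : Fin c × Fin c}
    (hp : p.1 < p.2) (hθ : θ p.1 p.2 = h ∨ θ p.2 p.1 = h) {τ : Fin c ⊕ Fin r}
    (h₁ : τ ≠ .inl p.1) (h₂ : τ ≠ .inl p.2) (hτ : τ ≠ .inr h) :
    Precedes (coreRow (k := k) θ (.inl (orientTo θ h p hp))) (.inr h) τ := by
  unfold orientTo
  split_ifs with hθp
  · simp only [coreRow, hθp]
    exact precedes_append_cons (p := [.inl p.1, .inl p.2]) (by simp) (by simp [h₁, h₂]) hτ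
  · simp only [coreRow, Prod.fst_swap, Prod.snd_swap, hθ.resolve_left hθp]
    exact precedes_append_cons (p := [.inl p.2, .inl p.1]) (by simp) (by simp [h₁, h₂]) hτ

lemma le_card_precedingRows_inr {χ : Sym2 (Fin c) → Finset (Fin r)} {θ : Fin c → Fin c → Fin r}
    (hθ : ∀ a b, a < b → ∀ h ∈ (χ s(a, b))ᶜ, θ a b = h ∨ θ b a = h) (co : Fin r)
    (hk : r ≤ k co) (hmono : ¬ HasMonoClique χ co (k co + 1)) (T : Finset (Fin c ⊕ Fin r))
    (hco : .inr co ∉ T) :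
    2 * c + r - 2 - #T ≤ #(precedingRows (coreRow (k := k) θ) (.inr co) T) := by
  set E := {p ∈ T.toLeftᶜ ×ˢ T.toLeftᶜ | p.1 < p.2 ∧ co ∉ χ s(p.1, p.2)}
  let f : ({x : Fin c ⊕ Fin r // x ≠ .inr co} ⊕ Fin (k co - r)) ⊕ ↥(T.toRightᶜ.erase co) ⊕ ↥E →
      CoreRow c r k
    | .inl j => .inr ⟨co, j⟩
    | .inr (.inl h) => .inr ⟨h, .inl ⟨.inr co, by simpa using (ne_of_mem_erase h.2).symm⟩⟩
    | .inr (.inr p) => .inl (orientTo θ co p.1 (mem_filter.1 p.2).2.1)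
  have hf : Function.Injective f := by
    rintro (j | ⟨h, hh⟩ | ⟨p, hp⟩) (j' | ⟨h', hh'⟩ | ⟨p', hp'⟩) hxx' <;>
      simp only [f, Sum.inl.injEq, Sum.inr.injEq, reduceCtorEq] at hxx' ⊢
    · exact eq_of_heq (Sigma.mk.inj_iff.1 hxx').2
    · exact ne_of_mem_erase hh' (congrArg Sigma.fst hxx').symm
    · exact ne_of_mem_erase hh (congrArg Sigma.fst hxx')
    · exact Subtype.ext (congrArg Sigma.fst hxx')
    · exact Subtype.ext (orientTo_inj hxx')
  have hprec : ∀ x, ∀ τ ∈ T, Precedes (coreRow θ (f x)) (.inr co) τ := by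
    have hτco : ∀ τ ∈ T, τ ≠ .inr co := fun τ hτ h => hco (h ▸ hτ)
    rintro ((x | j) | ⟨h, hh⟩ | ⟨p, hp⟩) τ hτ
    · exact precedes_append_cons (p := []) (by simp) (by simp) (hτco τ hτ)
    · exact precedes_append_cons (p := []) (by simp) (by simp) (hτco τ hτ)
    · refine precedes_append_cons (p := [.inr h]) (by simpa using (ne_of_mem_erase hh).symm)
        ?_ (hτco τ hτ)
      simp only [mem_erase, mem_compl, mem_toRight] at hh
      rw [List.mem_singleton]
      rintro rfl
      exact hh.2 hτ
    · obtain ⟨hpS, hlt, hmiss⟩ := mem_filter.1 hp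
      simp only [mem_product, mem_compl, mem_toLeft] at hpS
      exact precedes_coreRow_orientTo hlt (hθ _ _ hlt co (mem_compl.2 hmiss))
        (fun h => hpS.1 (h ▸ hτ)) (fun h => hpS.2 (h ▸ hτ)) (hτco τ hτ)
  have hsplit := card_toLeft_add_card_toRight (u := T)
  have hE : #T.toLeftᶜ ≤ #E + k co := card_le_card_missing_add hmono _
  have hcoT : co ∈ T.toRightᶜ := by simpa using hco
  have hTR : #T.toRight < r := by simpa using card_lt_univ_of_notMem (mem_compl.1 hcoT)
  have hTL : #T.toLeft ≤ c := by simpa using card_le_univ T.toLeft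
  refine le_trans ?_ (card_le_card_precedingRows f hf hprec)
  simp only [Fintype.card_sum, Fintype.card_coe, card_erase_of_mem hcoT, card_compl,
    Fintype.card_fin, ne_eq, Fintype.card_subtype_compl, Fintype.card_unique] at hE ⊢
  omega

theorem suitableCoreExists_of_coloring {t : ℕ} (ht : t + 2 = 2 * c + r) (hk : ∀ h, r ≤ k h)
    (χ : Sym2 (Fin c) → Finset (Fin r)) (hχ : ∀ e, #(χ e)ᶜ = 2)
    (hmono : ∀ h, ¬ HasMonoClique χ h (k h + 1)) :
    SuitableCoreExists ((c + r) * (c - 1) + ∑ h, k h) (c + r) t := by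
  obtain ⟨θ, hθ⟩ := exists_orientation (fun e => (χ e)ᶜ) hχ
  refine suitableCoreExists_of_rows finSumFinEquiv (coreRow (k := k) θ) (card_coreRow_le hk) ?_
  obtain rfl : t = 2 * c + r - 2 := by omega
  rintro (u | co) T hσ -
  · exact le_card_precedingRows_inl θ u T hσ
  · exact le_card_precedingRows_inr hθ co (hk co) (hmono co) T hσ

end Construction

theorem stmt15_general (δ α s c r : ℕ) (hδ : δ = 0 ∨ δ = 1) (hα : 3 ≤ α)
    (hc : (c : ℤ) = (s : ℤ) + δ + 2 - α) (hr : r = 2 * α - δ - 2)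
    (l : ℕ) (k : Fin r → ℕ) (hk : ∀ h, r ≤ k h) (hsum : ∑ h, k h = l)
    (χ : Sym2 (Fin c) → Finset (Fin r)) (hχ : ∀ e, (χ e).card = r - 2)
    (hmono : ∀ h : Fin r, ¬ HasMonoClique χ h (k h + 1)) :
    SuitableCoreExists ((s + α) * (c - 1) + l) (s + α) (2 * s + δ) := by
  have hv : s + α = c + r := by omega
  have hmissing : ∀ e, #(χ e)ᶜ = 2 := fun e => by
    rw [card_compl, hχ, Fintype.card_fin]
    omega
  rw [hv, ← hsum]
  exact suitableCoreExists_of_coloring (by omega) hk χ hmissing hmono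

/-- Let `δ ∈ {0,1}`, `α ≥ 3`, `t = 2s+δ`, `v = s+α`, `c = s+δ+2−α`, `r = 2α−δ−2`.
If `k₁,…,k_r ≥ r` sum to `l` and there is an `(r; r−2)`-coloring of `K_c` with no
monochromatic clique of `k_h+1` vertices in color `h` (i.e. `c < R^{r−2}(k₁+1,…,k_r+1)`),
then an `(v(c−1)+l, v, t)`-suitable core exists. -/
theorem stmt15 (δ α s c r : ℕ) (hδ : δ = 0 ∨ δ = 1) (hα : 3 ≤ α)
    (hc : (c : ℤ) = (s : ℤ) + δ + 2 - α) (hr : r = 2 * α - δ - 2)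
    (l : ℕ) (hl : 0 < l) (k : Fin r → ℕ) (hk : ∀ h, r ≤ k h) (hsum : ∑ h, k h = l)
    (χ : Sym2 (Fin c) → Finset (Fin r)) (hχ : ∀ e, (χ e).card = r - 2)
    (hmono : ∀ h : Fin r, ¬ HasMonoClique χ h (k h + 1)) :
    SuitableCoreExists ((s + α) * (c - 1) + l) (s + α) (2 * s + δ) :=
  stmt15_general δ α s c r hδ hα hc hr l k hk hsum χ hχ hmono
end

section
/- Let r > m ≥ 1 be integers and let k₁,…,k_r be integers with each k_i ≥ 2. Suppose R₁,…,R_r are positive integers such that for each i ∈ {1,…,r}, every (r;m)-coloring of the complete graph on R_i vertices contains, for some j, a monochromatic clique in color j of size k_j if j ≠ i and of size k_i − 1 if j = i. Then every (r;m)-coloring of the complete graph on n vertices with m·n ≥ R₁+⋯+R_r contains, for some j ∈ {1,…,r}, a monochromatic clique of k_j vertices in color j. (Equivalently, R^m(k₁,…,k_r) ≤ (R₁+⋯+R_r)/m where R_i = R^m(k₁,…,k_{i−1}, k_i−1, k_{i+1},…,k_r).) -/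
open Finset

section Coloring

variable {n r : ℕ} (χ : Sym2 (Fin n) → Finset (Fin r))

def colorNeighborFinset (v : Fin n) (i : Fin r) : Finset (Fin n) :=
  (univ.erase v).bipartiteAbove (fun i u => i ∈ χ s(v, u)) i

variable {χ}

theorem hasMonoClique_iff_pairwise {i : Fin r} {k : ℕ} :
    HasMonoClique χ i k ↔
      ∃ W : Finset (Fin n), W.card = k ∧ (W : Set (Fin n)).Pairwise fun a b => i ∈ χ s(a, b) :=
  Iff.rfl

@[simp]
theorem mem_colorNeighborFinset {v u : Fin n} {i : Fin r} :
    u ∈ colorNeighborFinset χ v i ↔ u ≠ v ∧ i ∈ χ s(v, u) := by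
  rw [colorNeighborFinset, mem_bipartiteAbove, mem_erase]
  exact and_congr_left fun _ => and_iff_left (mem_univ u)

theorem sum_card_colorNeighborFinset {m : ℕ} (hχ : ∀ e, (χ e).card = m) (v : Fin n) :
    ∑ i, (colorNeighborFinset χ v i).card = m * (n - 1) := by
  unfold colorNeighborFinset
  rw [sum_card_bipartiteAbove_eq_sum_card_bipartiteBelow]
  simp [bipartiteBelow, hχ, card_erase_of_mem, mul_comm]

theorem exists_le_card_colorNeighborFinset {m : ℕ} (hχ : ∀ e, (χ e).card = m) (hmr : m < r)
    (v : Fin n) {R : Fin r → ℕ} (hn : ∑ i, R i ≤ m * n) :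
    ∃ i, R i ≤ (colorNeighborFinset χ v i).card := by
  have hlt : ∑ i, R i < ∑ i, ((colorNeighborFinset χ v i).card + 1) := by
    rw [sum_add_distrib, sum_card_colorNeighborFinset hχ, sum_const, card_univ, Fintype.card_fin,
      smul_eq_mul, mul_one]
    calc ∑ i, R i ≤ m * (n - 1) + m := by rwa [← Nat.mul_add_one, Nat.sub_one_add_one v.pos.ne']
      _ < m * (n - 1) + r := by omega
  obtain ⟨i, -, hi⟩ := exists_lt_of_sum_lt hlt
  exact ⟨i, Nat.lt_succ_iff.mp hi⟩

theorem HasMonoClique.of_comap {p : ℕ} (f : Fin p ↪ Fin n) {i : Fin r} {k : ℕ}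
    (h : HasMonoClique (fun e => χ (e.map f)) i k) : HasMonoClique χ i k := by
  obtain ⟨W, hcard, hW⟩ := hasMonoClique_iff_pairwise.mp h
  rw [hasMonoClique_iff_pairwise]
  refine ⟨W.map f, by rw [card_map, hcard], ?_⟩
  rw [coe_map, f.injective.injOn.pairwise_image]
  exact hW

theorem HasMonoClique.succ_of_comap {p : ℕ} (f : Fin p ↪ Fin n) {i : Fin r} {k : ℕ} {v : Fin n}
    (hv : ∀ x, f x ∈ colorNeighborFinset χ v i)
    (h : HasMonoClique (fun e => χ (e.map f)) i k) : HasMonoClique χ i (k + 1) := by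
  obtain ⟨W, hcard, hW⟩ := hasMonoClique_iff_pairwise.mp h
  have hvW : v ∉ W.map f := by
    simpa [eq_comm] using fun x _ => (mem_colorNeighborFinset.mp (hv x)).1
  have hvf : ∀ x, i ∈ χ s(v, f x) := fun x => (mem_colorNeighborFinset.mp (hv x)).2
  rw [hasMonoClique_iff_pairwise]
  refine ⟨insert v (W.map f), by rw [card_insert_of_notMem hvW, card_map, hcard], ?_⟩
  rw [coe_insert, Set.pairwise_insert, coe_map, f.injective.injOn.pairwise_image]
  refine ⟨hW, ?_⟩
  rintro _ ⟨x, -, rfl⟩ -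
  exact ⟨hvf x, Sym2.eq_swap ▸ hvf x⟩

end Coloring

theorem stmt16_general (r m : ℕ) (hmr : m < r)
    (k : Fin r → ℕ) (hk : ∀ i, 2 ≤ k i)
    (R : Fin r → ℕ) (hR : ∀ i, 0 < R i)
    (hRam : ∀ i : Fin r, ∀ χ : Sym2 (Fin (R i)) → Finset (Fin r),
      (∀ e, (χ e).card = m) →
      ∃ j : Fin r, HasMonoClique χ j (if j = i then k j - 1 else k j))
    (n : ℕ) (hn : ∑ i, R i ≤ m * n)
    (χ : Sym2 (Fin n) → Finset (Fin r)) (hχ : ∀ e, (χ e).card = m) :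
    ∃ j : Fin r, HasMonoClique χ j (k j) := by
  have hn0 : 0 < n := by
    have : 0 < ∑ i, R i := sum_pos (fun i _ => hR i) ⟨⟨0, by omega⟩, mem_univ _⟩
    exact Nat.pos_of_mul_pos_left (this.trans_le hn)
  let v : Fin n := ⟨0, hn0⟩
  obtain ⟨i, hi⟩ := exists_le_card_colorNeighborFinset hχ hmr v hn
  let f : Fin (R i) ↪ Fin n :=
    (Fin.castLEEmb hi).trans ((colorNeighborFinset χ v i).orderEmbOfFin rfl).toEmbedding
  have hf : ∀ x, f x ∈ colorNeighborFinset χ v i := fun _ => orderEmbOfFin_mem _ rfl _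
  obtain ⟨j, hj⟩ := hRam i (fun e => χ (e.map f)) fun e => hχ _
  refine ⟨j, ?_⟩
  by_cases hji : j = i
  · subst hji
    rw [if_pos rfl] at hj
    simpa [Nat.sub_add_cancel (one_le_two.trans (hk j))] using hj.succ_of_comap f hf
  · rw [if_neg hji] at hj
    exact hj.of_comap f

/-- Recurrence for extended Ramsey numbers:
`R^m(k₁,…,k_r) ≤ (R₁+⋯+R_r)/m` where `Rᵢ = R^m(k₁,…,kᵢ−1,…,k_r)`. Stated via colorings:
if every `(r;m)`-coloring of `K_{Rᵢ}` has, for some `j`, a monochromatic clique in color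
`j` of size `k_j` (or `k_i − 1` when `j = i`), then every `(r;m)`-coloring of `K_n` with
`m·n ≥ R₁+⋯+R_r` has a monochromatic clique of `k_j` vertices in some color `j`. -/
theorem stmt16 (r m : ℕ) (hm : 1 ≤ m) (hmr : m < r)
    (k : Fin r → ℕ) (hk : ∀ i, 2 ≤ k i)
    (R : Fin r → ℕ) (hR : ∀ i, 0 < R i)
    (hRam : ∀ i : Fin r, ∀ χ : Sym2 (Fin (R i)) → Finset (Fin r),
      (∀ e, (χ e).card = m) →
      ∃ j : Fin r, HasMonoClique χ j (if j = i then k j - 1 else k j))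
    (n : ℕ) (hn : ∑ i, R i ≤ m * n)
    (χ : Sym2 (Fin n) → Finset (Fin r)) (hχ : ∀ e, (χ e).card = m) :
    ∃ j : Fin r, HasMonoClique χ j (k j) :=
  stmt16_general r m hmr k hk R hR hRam n hn χ hχ
end
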